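/- arXiv:1303.7173 — 7 statements merged into one kernel-verified Lean document; each statement's English description precedes it below -/
import Mathlib

section
/- Let L ∈ ℝ^{n×n} (n ≥ 1) be symmetric with L 𝟙 = 0, with nonpositive off-diagonal entries (L_{hk} ≤ 0 for all h ≠ k), and with kernel equal to the span of 𝟙. Let X ∈ ℝ^{n×n} be a symmetric matrix satisfying X L = I − 𝟙 e₀ᵀ and X e₀ = 0. Then for all indices h, k one has X_{hh} ≥ X_{hk} ≥ 0. -/
open Matrix

section Helpers

variable {n : ℕ}

/-- Connectivity: a nonempty set of vertices closed under neighbors is everything. -/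
lemma laplacian_connected_aux (L : Matrix (Fin n) (Fin n) ℝ)
    (hLsymm : L.IsSymm)
    (hL1 : L *ᵥ (fun _ => 1) = 0)
    (hker : LinearMap.ker L.mulVecLin = Submodule.span ℝ {(fun _ => 1 : Fin n → ℝ)})
    (S : Finset (Fin n)) (hS : S.Nonempty)
    (hclosed : ∀ k ∈ S, ∀ j, L k j ≠ 0 → j ∈ S) :
    ∀ j, j ∈ S := by
  set w : Fin n → ℝ := fun j => if j ∈ S then 1 else 0 with hw
  have rowsum : ∀ k, ∑ j, L k j = 0 := by
    intro k
    have := congrFun hL1 k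
    simpa [mulVec, dotProduct] using this
  have hLw : L *ᵥ w = 0 := by
    funext k
    show ∑ j, L k j * w j = 0
    by_cases hk : k ∈ S
    · have hterm : ∀ j, L k j * w j = L k j := by
        intro j
        by_cases hj : j ∈ S
        · simp [w, hj]
        · have hz : L k j = 0 := by
            by_contra h; exact hj (hclosed k hk j h)
          simp [hz]
      rw [Finset.sum_congr rfl fun j _ => hterm j, rowsum k]
    · have hterm : ∀ j, L k j * w j = 0 := by
        intro j
        by_cases hj : j ∈ S
        · have hz : L k j = 0 := by
            by_contra h
            apply hk
            have hsym : L j k = L k j := hLsymm.apply k j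
            exact hclosed j hj k (by rw [hsym]; exact h)
          simp [hz]
        · simp [w, hj]
      rw [Finset.sum_congr rfl fun j _ => hterm j]
      simp
  have hmem : w ∈ LinearMap.ker L.mulVecLin := by
    rw [LinearMap.mem_ker, Matrix.mulVecLin_apply, hLw]
  rw [hker, Submodule.mem_span_singleton] at hmem
  obtain ⟨c, hc⟩ := hmem
  obtain ⟨k₀, hk₀⟩ := hS
  have hc1 : c = 1 := by
    have := congrFun hc k₀
    simpa [w, hk₀] using this
  intro j
  have := congrFun hc j
  rw [hc1] at this
  simp only [Pi.smul_apply, smul_eq_mul, one_mul] at this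
  by_contra hj
  simp [w, hj] at this

/-- Maximum principle: if `(L v)_k ≤ 0` for all `k ≠ a`, then `v` attains its
maximum at `a`. -/
lemma laplacian_max_principle (hn : 1 ≤ n) (L : Matrix (Fin n) (Fin n) ℝ)
    (hLsymm : L.IsSymm)
    (hL1 : L *ᵥ (fun _ => 1) = 0)
    (hLoff : ∀ h k : Fin n, h ≠ k → L h k ≤ 0)
    (hker : LinearMap.ker L.mulVecLin = Submodule.span ℝ {(fun _ => 1 : Fin n → ℝ)})
    (v : Fin n → ℝ) (a : Fin n)
    (hv : ∀ k, k ≠ a → (L *ᵥ v) k ≤ 0) :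
    ∀ k, v k ≤ v a := by
  have rowsum : ∀ k, ∑ j, L k j = 0 := by
    intro k
    have := congrFun hL1 k
    simpa [mulVec, dotProduct] using this
  obtain ⟨m, -, hm⟩ := Finset.exists_max_image Finset.univ v ⟨a, Finset.mem_univ a⟩
  have hm' : ∀ k, v k ≤ v m := fun k => hm k (Finset.mem_univ k)
  set S : Finset (Fin n) := Finset.univ.filter (fun k => v k = v m) with hSdef
  have hmemS : ∀ k, k ∈ S ↔ v k = v m := by
    intro k; simp [hSdef]
  by_cases ha : a ∈ S
  · intro k
    have : v a = v m := (hmemS a).mp ha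
    rw [this]; exact hm' k
  · exfalso
    apply ha
    refine laplacian_connected_aux L hLsymm hL1 hker S ⟨m, (hmemS m).mpr rfl⟩ ?_ a
    intro k hk j hLkj
    have hvk : v k = v m := (hmemS k).mp hk
    have hka : k ≠ a := by
      intro h; subst h; exact ha hk
    have hLvk : (L *ᵥ v) k ≤ 0 := hv k hka
    have hrw : (L *ᵥ v) k = ∑ j, L k j * (v j - v k) := by
      have : ∑ j, L k j * (v j - v k) = (∑ j, L k j * v j) - (∑ j, L k j) * v k := by
        rw [Finset.sum_mul, ← Finset.sum_sub_distrib]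
        apply Finset.sum_congr rfl
        intro j _; ring
      rw [this, rowsum k]
      simp [mulVec, dotProduct]
    have hnonneg : ∀ i ∈ Finset.univ, (0:ℝ) ≤ L k i * (v i - v k) := by
      intro i _
      by_cases hik : i = k
      · subst hik; simp
      · have h1 : L k i ≤ 0 := hLoff k i (Ne.symm hik)
        have h2 : v i - v k ≤ 0 := by
          rw [hvk]; linarith [hm' i]
        nlinarith
    have hsum0 : ∑ i, L k i * (v i - v k) = 0 := by
      have hge : (0:ℝ) ≤ ∑ i, L k i * (v i - v k) := Finset.sum_nonneg hnonneg
      rw [hrw] at hLvk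
      linarith
    have hterm0 : L k j * (v j - v k) = 0 :=
      (Finset.sum_eq_zero_iff_of_nonneg hnonneg).mp hsum0 j (Finset.mem_univ j)
    have : v j - v k = 0 := by
      rcases mul_eq_zero.mp hterm0 with h | h
      · exact absurd h hLkj
      · exact h
    rw [hmemS]
    rw [← hvk]
    linarith

end Helpers

/-- Let `L` be symmetric with `L 𝟙 = 0`, nonpositive off-diagonal
entries, and kernel equal to the span of `𝟙` (i.e. a weighted Laplacian of a
connected graph), and let `X` be symmetric with `X L = I - 𝟙 e₀ᵀ` and `X e₀ = 0`.
Then `X_{hh} ≥ X_{hk} ≥ 0` for all `h, k`. -/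
theorem green_matrix_entries_nonneg (n : ℕ) (hn : 1 ≤ n)
    (L : Matrix (Fin n) (Fin n) ℝ)
    (hLsymm : L.IsSymm)
    (hL1 : L *ᵥ (fun _ => 1) = 0)
    (hLoff : ∀ h k : Fin n, h ≠ k → L h k ≤ 0)
    (hker : LinearMap.ker L.mulVecLin = Submodule.span ℝ {(fun _ => 1 : Fin n → ℝ)})
    (X : Matrix (Fin n) (Fin n) ℝ)
    (hXsymm : X.IsSymm)
    (hXL : X * L = 1 - Matrix.vecMulVec (fun _ => 1) (Pi.single (⟨0, hn⟩ : Fin n) 1))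
    (hX0 : X *ᵥ Pi.single (⟨0, hn⟩ : Fin n) 1 = 0) :
    ∀ h k : Fin n, X h k ≤ X h h ∧ 0 ≤ X h k := by
  intro h k
  set z : Fin n := (⟨0, hn⟩ : Fin n) with hz
  set v : Fin n → ℝ := fun j => X j h with hvdef
  -- value of L *ᵥ v
  have hLv : ∀ i, (L *ᵥ v) i = (if h = i then (1:ℝ) else 0) - (if i = z then (1:ℝ) else 0) := by
    intro i
    have step1 : (L *ᵥ v) i = (X * L) h i := by
      simp only [mulVec, dotProduct, mul_apply, hvdef]
      apply Finset.sum_congr rfl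
      intro j _
      rw [hLsymm.apply i j, hXsymm.apply h j]
      ring
    rw [step1, hXL]
    simp [Matrix.sub_apply, Matrix.one_apply, Matrix.vecMulVec_apply, Pi.single_apply]
  -- v at z is 0
  have hvz : v z = 0 := by
    have := congrFun hX0 h
    simp only [Pi.zero_apply] at this
    have hxz : X h z = 0 := by
      simpa [mulVec, dotProduct, Pi.single_apply, Finset.sum_ite_eq'] using this
    simp only [hvdef]
    rw [hXsymm.apply h z]
    exact hxz
  constructor
  · -- X h k ≤ X h h : maximum principle at a = h
    have hmax := laplacian_max_principle hn L hLsymm hL1 hLoff hker v h ?_ k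
    · rw [hXsymm.apply k h]
      exact hmax
    · intro i hi
      rw [hLv i]
      have : (if h = i then (1:ℝ) else 0) = 0 := by
        simp [Ne.symm hi]
      rw [this]
      by_cases hiz : i = z <;> simp [hiz]
  · -- 0 ≤ X h k : minimum principle at a = z, applied to -v
    have hmin := laplacian_max_principle hn L hLsymm hL1 hLoff hker (-v) z ?_ k
    · simp only [Pi.neg_apply, hvz, neg_zero] at hmin
      have : 0 ≤ v k := by linarith
      rw [hXsymm.apply k h]
      exact this
    · intro i hi
      have : (L *ᵥ (-v)) i = - (L *ᵥ v) i := by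
        rw [Matrix.mulVec_neg]; simp
      rw [this, hLv i]
      have h2 : (if i = z then (1:ℝ) else 0) = 0 := by simp [hi]
      rw [h2]
      by_cases hhi : h = i <;> simp [hhi]
end

section
/- Let T be a tree (a connected graph with n − 1 edges) on n ≥ 1 vertices indexed by {0,1,…,n−1}, given as a directed graph with incidence matrix A and positive edge weights w_e > 0 collected in the diagonal matrix Z = diag(w_e). Let L = Aᵀ Z⁻¹ A and let X be the unique symmetric matrix with X L = I − 𝟙 e₀ᵀ and X e₀ = 0. Then for any two vertices h and k, (e_h − e_k)ᵀ X (e_h − e_k) equals the sum of the weights w_e over the edges e on the unique path in T joining h and k. -/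
/-!
Multiplying `X L = I - 𝟙 e₀ᵀ` on the left by `A` kills the rank-one term, because `A 𝟙 = 0`, and
leaves `(A X Aᵀ Z⁻¹) A = A`. For a connected graph the kernel of `A` is spanned by `𝟙`; with
`n - 1` edges this forces `A` to have linearly independent rows, so `A` can be cancelled on the
right and `A X Aᵀ = Z`. The path from `h` to `k` gives a signed edge vector `f`, supported on the
path edges with entries `±1`, such that `fᵀ A = e_k - e_h`. Hence the quadratic form equals
`fᵀ (A X Aᵀ) f = fᵀ Z f`, the total weight of the path.
-/

open Matrix Module

theorem finrank_span_singleton_le_one {R M : Type*} [Ring R] [StrongRankCondition R]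
    [AddCommGroup M] [Module R M] (v : M) : finrank R (R ∙ v) ≤ 1 := by
  simpa using finrank_span_le_card ({v} : Set M)

namespace Matrix

variable {l m n K : Type*}

theorem rank_add_finrank_ker [Fintype n] [Field K] (A : Matrix m n K) :
    A.rank + finrank K (LinearMap.ker A.mulVecLin) = Fintype.card n := by
  simpa [Matrix.rank] using A.mulVecLin.finrank_range_add_finrank_ker

variable [Fintype m]

theorem vecMul_dotProduct_mulVec_vecMul {R : Type*} [CommSemiring R] [Fintype n]
    (A : Matrix m n R) (X : Matrix n n R) (f : m → R) :
    (f ᵥ* A) ⬝ᵥ (X *ᵥ (f ᵥ* A)) = f ⬝ᵥ ((A * X * Aᵀ) *ᵥ f) := by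
  rw [← mulVec_mulVec, ← mulVec_mulVec, mulVec_transpose, dotProduct_mulVec f A]

theorem eq_of_mul_eq_mul_of_vecMul_injective {R : Type*} [NonUnitalSemiring R]
    {A : Matrix m n R} (hA : Function.Injective A.vecMul) {M N : Matrix l m R}
    (h : M * A = N * A) : M = N := by
  cases isEmpty_or_nonempty l
  · exact Subsingleton.elim M N
  · exact mul_left_injective_iff_vecMul_injective.mpr hA h

theorem mul_mul_transpose_eq_of_mul_transpose_inv_mul_eq {R : Type*} [CommRing R] [Fintype n]
    [DecidableEq m] [DecidableEq n] {A : Matrix m n R} {D : Matrix m m R} {X : Matrix n n R}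
    {u : n → R} (hA : Function.Injective A.vecMul) (hA1 : A *ᵥ (fun _ => 1) = 0)
    (hD : IsUnit D) (hXL : X * (Aᵀ * D⁻¹ * A) = 1 - vecMulVec (fun _ => 1) u) :
    A * X * Aᵀ = D := by
  have hcancel : A * X * Aᵀ * D⁻¹ * A = (1 : Matrix m m R) * A := calc
    A * X * Aᵀ * D⁻¹ * A = A * (X * (Aᵀ * D⁻¹ * A)) := by simp only [Matrix.mul_assoc]
    _ = A - vecMulVec (A *ᵥ fun _ => 1) u := by
      rw [hXL, Matrix.mul_sub, Matrix.mul_one, mul_vecMulVec]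
    _ = (1 : Matrix m m R) * A := by rw [hA1, zero_vecMulVec, sub_zero, Matrix.one_mul]
  calc A * X * Aᵀ = A * X * Aᵀ * D⁻¹ * D := by
        rw [Matrix.mul_assoc _ D⁻¹, nonsing_inv_mul _ ((isUnit_iff_isUnit_det D).mp hD),
          Matrix.mul_one]
    _ = D := by rw [eq_of_mul_eq_mul_of_vecMul_injective hA hcancel, Matrix.one_mul]

variable [Fintype n] [Field K] {A : Matrix m n K} {v : n → K}

theorem rank_eq_card_height_of_ker_le_span (hker : LinearMap.ker A.mulVecLin ≤ K ∙ v)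
    (hcard : Fintype.card m < Fintype.card n) : A.rank = Fintype.card m := by
  have hker_le := (Submodule.finrank_mono hker).trans (finrank_span_singleton_le_one v)
  have hsum := A.rank_add_finrank_ker
  have hheight := A.rank_le_card_height
  omega

theorem linearIndependent_row_of_ker_le_span (hker : LinearMap.ker A.mulVecLin ≤ K ∙ v)
    (hcard : Fintype.card m < Fintype.card n) : LinearIndependent K A.row := by
  rw [linearIndependent_iff_card_eq_finrank_span, ← rank_eq_card_height_of_ker_le_span hker hcard]
  exact A.rank_eq_finrank_span_row

theorem mulVec_eq_zero_of_ker_le_span (hker : LinearMap.ker A.mulVecLin ≤ K ∙ v)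
    (hcard : Fintype.card m < Fintype.card n) : A *ᵥ v = 0 := by
  have hker_pos : 1 ≤ finrank K (LinearMap.ker A.mulVecLin) := by
    have hsum := A.rank_add_finrank_ker
    have hrank := rank_eq_card_height_of_ker_le_span hker hcard
    omega
  have hv : v ∈ LinearMap.ker A.mulVecLin :=
    Submodule.eq_of_le_of_finrank_le hker ((finrank_span_singleton_le_one v).trans hker_pos) ▸
      Submodule.mem_span_singleton_self v
  simpa using hv

end Matrix

theorem Fin.sum_succ_sub_castSucc {M : Type*} [AddCommGroup M] {ℓ : ℕ} (f : Fin (ℓ + 1) → M) :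
    ∑ i : Fin ℓ, (f i.succ - f i.castSucc) = f (Fin.last ℓ) - f 0 := by
  induction ℓ with
  | zero => simp
  | succ ℓ ih =>
    have ih' := ih fun j => f j.castSucc
    rw [Fin.sum_univ_castSucc]
    simp only [Fin.succ_castSucc] at ih' ⊢
    rw [ih', Fin.succ_last, Fin.castSucc_zero]
    abel

section OrientedGraph

variable {V E : Type*} {src tgt : E → V}

def EdgeAdj (src tgt : E → V) (a b : V) : Prop :=
  ∃ e, (src e = a ∧ tgt e = b) ∨ (src e = b ∧ tgt e = a)

def IsWalk (src tgt : E → V) {ℓ : ℕ} (vs : Fin (ℓ + 1) → V) (es : Fin ℓ → E) : Prop :=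
  ∀ i, (src (es i) = vs i.castSucc ∧ tgt (es i) = vs i.succ) ∨
    (src (es i) = vs i.succ ∧ tgt (es i) = vs i.castSucc)

theorem IsWalk.injective {ℓ : ℕ} {vs : Fin (ℓ + 1) → V} {es : Fin ℓ → E}
    (hw : IsWalk src tgt vs es) (hvs : Function.Injective vs) : Function.Injective es := by
  have hends : ∀ i, s(src (es i), tgt (es i)) = s(vs i.castSucc, vs i.succ) := fun i => by
    rcases hw i with ⟨hs, ht⟩ | ⟨hs, ht⟩ <;> simp [hs, ht, Sym2.eq_swap]
  intro i j hij
  rcases Sym2.eq_iff.mp ((hends i).symm.trans (hij ▸ hends j)) with ⟨h1, -⟩ | ⟨h1, h2⟩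
  · exact Fin.castSucc_injective _ (hvs h1)
  · have h1 := congrArg Fin.val (hvs h1)
    have h2 := congrArg Fin.val (hvs h2)
    simp only [Fin.val_castSucc, Fin.val_succ] at h1 h2
    omega

variable [DecidableEq V] {R : Type*} [Ring R]

/-- A self-loop `e` gets the row `e_{tgt e}`, not `0`; hence the hypotheses `src e ≠ tgt e`. -/
def orientedIncidenceMatrix (R : Type*) [Ring R] (src tgt : E → V) : Matrix E V R :=
  of fun e v => if v = tgt e then 1 else if v = src e then -1 else 0

theorem orientedIncidenceMatrix_row_of_ne {e : E} (he : src e ≠ tgt e) :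
    (orientedIncidenceMatrix R src tgt).row e = Pi.single (tgt e) 1 - Pi.single (src e) 1 := by
  ext v
  by_cases hvt : v = tgt e
  · subst hvt; simp [orientedIncidenceMatrix, he.symm]
  · by_cases hvs : v = src e
    · subst hvs; simp [orientedIncidenceMatrix, he]
    · simp [orientedIncidenceMatrix, hvt, hvs]

section Walk

variable [DecidableEq E] [Fintype E] {ℓ : ℕ} {vs : Fin (ℓ + 1) → V} {es : Fin ℓ → E}

def walkFlow (R : Type*) [Ring R] (src : E → V) (vs : Fin (ℓ + 1) → V) (es : Fin ℓ → E) : E → R :=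
  ∑ i, (if src (es i) = vs i.castSucc then 1 else -1 : R) • Pi.single (es i) 1

theorem IsWalk.walkFlow_vecMul (hw : IsWalk src tgt vs es)
    (hne : ∀ i : Fin ℓ, vs i.castSucc ≠ vs i.succ) :
    walkFlow R src vs es ᵥ* orientedIncidenceMatrix R src tgt =
      Pi.single (vs (Fin.last ℓ)) 1 - Pi.single (vs 0) 1 := by
  rw [walkFlow, sum_vecMul]
  refine (Finset.sum_congr rfl fun i _ => ?_).trans
    (Fin.sum_succ_sub_castSucc fun j => (Pi.single (vs j) 1 : V → R))
  rw [smul_vecMul, single_one_vecMul]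
  rcases hw i with ⟨hs, ht⟩ | ⟨hs, ht⟩
  · rw [orientedIncidenceMatrix_row_of_ne (hs ▸ ht ▸ hne i), if_pos hs, one_smul, hs, ht]
  · rw [orientedIncidenceMatrix_row_of_ne (hs ▸ ht ▸ (hne i).symm), if_neg (hs ▸ (hne i).symm),
      hs, ht, neg_one_smul, neg_sub]

theorem walkFlow_dotProduct_diagonal_mulVec {R : Type*} [CommRing R]
    (hes : Function.Injective es) (w : E → R) :
    walkFlow R src vs es ⬝ᵥ (diagonal w *ᵥ walkFlow R src vs es) = ∑ i, w (es i) := by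
  simp only [walkFlow, mulVec_sum, mulVec_smul, diagonal_mulVec_single, dotProduct_sum,
    sum_dotProduct, smul_dotProduct, dotProduct_smul, single_dotProduct, Pi.single_apply,
    hes.eq_iff, one_mul, mul_one, smul_ite, smul_zero, Finset.sum_ite_eq', Finset.mem_univ,
    if_true, smul_smul]
  refine Finset.sum_congr rfl fun i _ => ?_
  split_ifs <;> simp

end Walk

variable [Fintype V]

theorem orientedIncidenceMatrix_mulVec_apply_of_ne (x : V → R) {e : E} (he : src e ≠ tgt e) :
    (orientedIncidenceMatrix R src tgt *ᵥ x) e = x (tgt e) - x (src e) := by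
  change (orientedIncidenceMatrix R src tgt).row e ⬝ᵥ x = _
  rw [orientedIncidenceMatrix_row_of_ne he, sub_dotProduct, single_one_dotProduct,
    single_one_dotProduct]

theorem eq_of_orientedIncidenceMatrix_mulVec_eq_zero {x : V → R}
    (hx : orientedIncidenceMatrix R src tgt *ᵥ x = 0) {a b : V}
    (hab : Relation.ReflTransGen (EdgeAdj src tgt) a b) : x a = x b := by
  induction hab with
  | refl => rfl
  | tail _ hbc ih =>
    obtain ⟨e, he⟩ := hbc
    rw [ih]
    by_cases hloop : src e = tgt e
    · rcases he with ⟨rfl, rfl⟩ | ⟨rfl, rfl⟩ <;> rw [hloop]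
    · have hxe := orientedIncidenceMatrix_mulVec_apply_of_ne x hloop
      rw [hx, Pi.zero_apply, eq_comm, sub_eq_zero] at hxe
      rcases he with ⟨rfl, rfl⟩ | ⟨rfl, rfl⟩ <;> simp [hxe]

theorem ker_orientedIncidenceMatrix_le_span_one {K : Type*} [Field K]
    (hconn : ∀ a b, Relation.ReflTransGen (EdgeAdj src tgt) a b) :
    LinearMap.ker (orientedIncidenceMatrix K src tgt).mulVecLin ≤ K ∙ fun _ => 1 := by
  intro x hx
  rw [LinearMap.mem_ker, mulVecLin_apply] at hx
  rcases isEmpty_or_nonempty V with hV | ⟨⟨v₀⟩⟩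
  · simp [Subsingleton.elim x 0]
  · refine Submodule.mem_span_singleton.mpr ⟨x v₀, funext fun v => ?_⟩
    simp [eq_of_orientedIncidenceMatrix_mulVec_eq_zero hx (hconn v v₀)]

end OrientedGraph

theorem green_matrix_effective_resistance_general (n E : ℕ) (hn : 1 ≤ n)
    (src tgt : Fin E → Fin n)
    (hconn : ∀ v w : Fin n, Relation.ReflTransGen
      (fun a b => ∃ e : Fin E, (src e = a ∧ tgt e = b) ∨ (src e = b ∧ tgt e = a)) v w)
    (htree : E = n - 1)
    (A : Matrix (Fin E) (Fin n) ℝ)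
    (hA : ∀ e v, A e v = if v = tgt e then 1 else if v = src e then -1 else 0)
    (w : Fin E → ℝ) (hw : ∀ e, 0 < w e)
    (L : Matrix (Fin n) (Fin n) ℝ)
    (hL : L = Aᵀ * (Matrix.diagonal w)⁻¹ * A)
    (X : Matrix (Fin n) (Fin n) ℝ)
    (hXL : X * L = 1 - Matrix.vecMulVec (fun _ => 1) (Pi.single (⟨0, hn⟩ : Fin n) 1))
    (h k : Fin n)
    (ℓ : ℕ) (vs : Fin (ℓ + 1) → Fin n) (es : Fin ℓ → Fin E)
    (hinj : Function.Injective vs)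
    (hfirst : vs 0 = h) (hlast : vs (Fin.last ℓ) = k)
    (hpath : ∀ i : Fin ℓ,
      (src (es i) = vs i.castSucc ∧ tgt (es i) = vs i.succ) ∨
      (src (es i) = vs i.succ ∧ tgt (es i) = vs i.castSucc)) :
    (Pi.single h 1 - Pi.single k 1) ⬝ᵥ (X *ᵥ (Pi.single h 1 - Pi.single k 1)) =
      ∑ i : Fin ℓ, w (es i) := by
  obtain rfl : A = orientedIncidenceMatrix ℝ src tgt := Matrix.ext hA
  have hker := ker_orientedIncidenceMatrix_le_span_one (K := ℝ) hconn
  have hcard : Fintype.card (Fin E) < Fintype.card (Fin n) := by simp only [Fintype.card_fin]; omega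
  have hZ : IsUnit (diagonal w) := isUnit_diagonal.mpr (Pi.isUnit_iff.mpr fun e => (hw e).ne'.isUnit)
  have hAXA : orientedIncidenceMatrix ℝ src tgt * X * (orientedIncidenceMatrix ℝ src tgt)ᵀ =
      diagonal w :=
    mul_mul_transpose_eq_of_mul_transpose_inv_mul_eq
      (vecMul_injective_iff.mpr (linearIndependent_row_of_ker_le_span hker hcard))
      (mulVec_eq_zero_of_ker_le_span hker hcard) hZ (hL ▸ hXL)
  have hflow := IsWalk.walkFlow_vecMul (R := ℝ) hpath fun i => hinj.ne Fin.castSucc_lt_succ.ne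
  rw [hfirst, hlast] at hflow
  have hu : Pi.single h 1 - Pi.single k 1 =
      -walkFlow ℝ src vs es ᵥ* orientedIncidenceMatrix ℝ src tgt := by
    rw [neg_vecMul, hflow, neg_sub]
  rw [hu, vecMul_dotProduct_mulVec_vecMul, hAXA, mulVec_neg, dotProduct_neg, neg_dotProduct,
    neg_neg, walkFlow_dotProduct_diagonal_mulVec (IsWalk.injective hpath hinj)]

/-- For a tree (connected graph with `n - 1` edges) with weighted
Laplacian `L = Aᵀ Z⁻¹ A` and Green matrix `X` (the unique symmetric matrix with
`X L = I - 𝟙 e₀ᵀ` and `X e₀ = 0`), for any two vertices `h, k`, the quadratic form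
`(e_h - e_k)ᵀ X (e_h - e_k)` equals the sum of the weights of the edges on the
(unique) path joining `h` and `k`. A path from `h` to `k` is given by an injective
sequence of vertices `vs : Fin (ℓ+1) → Fin n` starting at `h`, ending at `k`, with
consecutive vertices joined (in either direction) by the edges `es : Fin ℓ → Fin E`. -/
theorem green_matrix_effective_resistance (n E : ℕ) (hn : 1 ≤ n)
    (src tgt : Fin E → Fin n)
    (hconn : ∀ v w : Fin n, Relation.ReflTransGen
      (fun a b => ∃ e : Fin E, (src e = a ∧ tgt e = b) ∨ (src e = b ∧ tgt e = a)) v w)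
    (htree : E = n - 1)
    (A : Matrix (Fin E) (Fin n) ℝ)
    (hA : ∀ e v, A e v = if v = tgt e then 1 else if v = src e then -1 else 0)
    (w : Fin E → ℝ) (hw : ∀ e, 0 < w e)
    (L : Matrix (Fin n) (Fin n) ℝ)
    (hL : L = Aᵀ * (Matrix.diagonal w)⁻¹ * A)
    (X : Matrix (Fin n) (Fin n) ℝ)
    (hXsymm : X.IsSymm)
    (hXL : X * L = 1 - Matrix.vecMulVec (fun _ => 1) (Pi.single (⟨0, hn⟩ : Fin n) 1))
    (hX0 : X *ᵥ Pi.single (⟨0, hn⟩ : Fin n) 1 = 0)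
    (h k : Fin n)
    (ℓ : ℕ) (vs : Fin (ℓ + 1) → Fin n) (es : Fin ℓ → Fin E)
    (hinj : Function.Injective vs)
    (hfirst : vs 0 = h) (hlast : vs (Fin.last ℓ) = k)
    (hpath : ∀ i : Fin ℓ,
      (src (es i) = vs i.castSucc ∧ tgt (es i) = vs i.succ) ∨
      (src (es i) = vs i.succ ∧ tgt (es i) = vs i.castSucc)) :
    (Pi.single h 1 - Pi.single k 1) ⬝ᵥ (X *ᵥ (Pi.single h 1 - Pi.single k 1)) =
      ∑ i : Fin ℓ, w (es i) :=
  green_matrix_effective_resistance_general n E hn src tgt hconn htree A hA w hw L hL X hXL h k ℓ vs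
    es hinj hfirst hlast hpath
end

section
/- Let m ≥ 2 and let M ∈ ℝ^{(m−1)×(m−1)} be symmetric and invertible. Define the block matrix G ∈ ℝ^{m×m} (with the first index playing the role of index 0) by G = [[𝟙ᵀ M⁻¹ 𝟙, −𝟙ᵀ M⁻¹], [−M⁻¹ 𝟙, M⁻¹]]. Then G is symmetric and satisfies diag(0, M) · G = I − 𝟙 e₀ᵀ and G 𝟙 = 0, where diag(0, M) denotes the m×m block-diagonal matrix with scalar block 0 and block M, 𝟙 is the all-ones vector of the appropriate size, and e₀ is the standard basis vector of index 0. -/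
open Matrix

/-- For `m ≥ 2` (here `m = e + 1` with `e ≥ 1`, and the index set is
`Unit ⊕ Fin e`, the `Unit` summand playing the role of index `0`) and `M` symmetric
and invertible, the block matrix `G = [[𝟙ᵀM⁻¹𝟙, -𝟙ᵀM⁻¹], [-M⁻¹𝟙, M⁻¹]]` is symmetric
and satisfies `diag(0, M) · G = I - 𝟙 e₀ᵀ` and `G 𝟙 = 0`. -/
theorem block_green_matrix_exists (e : ℕ) (he : 1 ≤ e)
    (M : Matrix (Fin e) (Fin e) ℝ)
    (hMsymm : M.IsSymm) (hMinv : IsUnit M.det) :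
    (Matrix.fromBlocks
        (Matrix.of fun _ _ : Unit => (fun _ => (1 : ℝ)) ⬝ᵥ (M⁻¹ *ᵥ fun _ => 1))
        (Matrix.of fun (_ : Unit) j => -(((fun _ => (1 : ℝ)) ᵥ* M⁻¹) j))
        (Matrix.of fun i (_ : Unit) => -((M⁻¹ *ᵥ fun _ => (1 : ℝ)) i))
        M⁻¹).IsSymm ∧
    Matrix.fromBlocks (0 : Matrix Unit Unit ℝ) 0 0 M *
      (Matrix.fromBlocks
        (Matrix.of fun _ _ : Unit => (fun _ => (1 : ℝ)) ⬝ᵥ (M⁻¹ *ᵥ fun _ => 1))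
        (Matrix.of fun (_ : Unit) j => -(((fun _ => (1 : ℝ)) ᵥ* M⁻¹) j))
        (Matrix.of fun i (_ : Unit) => -((M⁻¹ *ᵥ fun _ => (1 : ℝ)) i))
        M⁻¹) =
      1 - Matrix.vecMulVec (fun _ => 1) (Pi.single (Sum.inl () : Unit ⊕ Fin e) 1) ∧
    (Matrix.fromBlocks
        (Matrix.of fun _ _ : Unit => (fun _ => (1 : ℝ)) ⬝ᵥ (M⁻¹ *ᵥ fun _ => 1))
        (Matrix.of fun (_ : Unit) j => -(((fun _ => (1 : ℝ)) ᵥ* M⁻¹) j))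
        (Matrix.of fun i (_ : Unit) => -((M⁻¹ *ᵥ fun _ => (1 : ℝ)) i))
        M⁻¹) *ᵥ (fun _ => 1) = 0 := by

  have hN : (M⁻¹).IsSymm := by
    unfold Matrix.IsSymm
    rw [Matrix.transpose_nonsing_inv, hMsymm.eq]
  have hvm : ((fun _ => (1:ℝ)) ᵥ* M⁻¹) = (M⁻¹ *ᵥ fun _ => 1) := by
    rw [← Matrix.mulVec_transpose, hN.eq]
  have hMN : M * M⁻¹ = 1 := Matrix.mul_nonsing_inv M hMinv
  have hMc : ∀ i, (M *ᵥ (M⁻¹ *ᵥ fun _ => (1:ℝ))) i = 1 := by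
    intro i
    rw [Matrix.mulVec_mulVec, hMN, Matrix.one_mulVec]
  have hMc' : ∀ i, ∑ k, M i k * (M⁻¹ *ᵥ fun _ => (1:ℝ)) k = 1 := by
    simpa [Matrix.mulVec, dotProduct] using hMc
  refine ⟨?_, ?_, ?_⟩
  · unfold Matrix.IsSymm
    rw [Matrix.fromBlocks_transpose]
    ext i j
    rcases i with i | i <;> rcases j with j | j <;>
      simp [hvm, hN.apply]
  · rw [Matrix.fromBlocks_multiply]
    ext i j
    rcases i with i | i <;> rcases j with j | j <;>
      simp [hMN, Matrix.vecMulVec_apply, Pi.single_apply, Matrix.one_apply,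
        Matrix.mulVec_neg, hMc, Matrix.mul_apply, mul_neg, hMc']
  · ext i
    rcases i with i | i <;>
      simp [Matrix.mulVec, dotProduct, hvm]
end

section
/- Let m ≥ 2 and let M ∈ ℝ^{(m−1)×(m−1)} be symmetric and invertible. Then there is at most one symmetric matrix G ∈ ℝ^{m×m} satisfying diag(0, M) · G = I − 𝟙 e₀ᵀ and G 𝟙 = 0; namely, any such G equals the block matrix [[𝟙ᵀ M⁻¹ 𝟙, −𝟙ᵀ M⁻¹], [−M⁻¹ 𝟙, M⁻¹]]. -/
/-!
Write `G = [[a, b], [c, H]]` in blocks. The lower block row of `diag(0, M) G = I - 𝟙 e₀ᵀ` reads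
`M c = -𝟙` and `M H = I`, so `c = -M⁻¹ 𝟙` and `H = M⁻¹`. Symmetry of `G` gives `b = cᵀ` and
makes `M⁻¹ = H` symmetric, and the first entry of `G 𝟙 = 0` gives `a = -b 𝟙 = 𝟙ᵀ M⁻¹ 𝟙`.
-/

open Matrix

theorem one_sub_vecMulVec_one_single_inl {R n : Type*} [Ring R] [DecidableEq n] :
    (1 - vecMulVec (fun _ => 1) (Pi.single (Sum.inl ()) 1) :
      Matrix (Unit ⊕ n) (Unit ⊕ n) R) = fromBlocks 0 0 (of fun _ _ => -1) 1 := by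
  ext (i | i) (j | j) <;> simp [vecMulVec_apply, one_apply]

theorem lower_blocks_of_fromBlocks_zero_mul_eq {R n : Type*} [CommRing R] [Fintype n]
    [DecidableEq n] {M : Matrix n n R} (hM : IsUnit M.det) {A : Matrix Unit Unit R}
    {B : Matrix Unit n R} {C : Matrix n Unit R} {D : Matrix n n R}
    (h : fromBlocks (0 : Matrix Unit Unit R) 0 0 M * fromBlocks A B C D =
      1 - vecMulVec (fun _ => 1) (Pi.single (Sum.inl ()) 1)) :
    C = (of fun i _ => -(M⁻¹ *ᵥ fun _ => 1) i) ∧ D = M⁻¹ := by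
  rw [fromBlocks_multiply, one_sub_vecMulVec_one_single_inl, fromBlocks_inj] at h
  simp only [Matrix.zero_mul, zero_add] at h
  obtain ⟨-, -, hMC, hMD⟩ := h
  refine ⟨?_, (inv_eq_right_inv hMD).symm⟩
  have hC : C = M⁻¹ * (of fun _ _ => -1 : Matrix n Unit R) := by
    rw [← hMC, nonsing_inv_mul_cancel_left M C hM]
  ext i ⟨⟩
  simp [hC, mul_apply, mulVec, dotProduct]

theorem corner_eq_of_fromBlocks_mulVec_one_eq_zero {R n : Type*} [Ring R] [Fintype n]
    {A : Matrix Unit Unit R} {B : Matrix Unit n R} {C : Matrix n Unit R} {D : Matrix n n R}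
    (h : fromBlocks A B C D *ᵥ (fun _ => 1) = 0) :
    A = of fun _ _ => -∑ j, B () j := by
  ext ⟨⟩ ⟨⟩
  have hrow := congrFun h (Sum.inl ())
  simp only [mulVec, dotProduct, Fintype.sum_sum_type, fromBlocks_apply₁₁, fromBlocks_apply₁₂,
    mul_one, Fintype.univ_unit, Finset.sum_singleton, Pi.zero_apply] at hrow
  simpa using eq_neg_of_add_eq_zero_left hrow

/-- Here `m = e + 1`, with index set `Unit ⊕ Fin e`; the `Unit` summand plays the role of
index `0`. -/
theorem block_green_matrix_unique_general (e : ℕ)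
    (M : Matrix (Fin e) (Fin e) ℝ)
    (hMinv : IsUnit M.det)
    (G : Matrix (Unit ⊕ Fin e) (Unit ⊕ Fin e) ℝ)
    (hGsymm : G.IsSymm)
    (hG1 : Matrix.fromBlocks (0 : Matrix Unit Unit ℝ) 0 0 M * G =
      1 - Matrix.vecMulVec (fun _ => 1) (Pi.single (Sum.inl () : Unit ⊕ Fin e) 1))
    (hG2 : G *ᵥ (fun _ => 1) = 0) :
    G = Matrix.fromBlocks
        (Matrix.of fun _ _ : Unit => (fun _ => (1 : ℝ)) ⬝ᵥ (M⁻¹ *ᵥ fun _ => 1))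
        (Matrix.of fun (_ : Unit) j => -(((fun _ => (1 : ℝ)) ᵥ* M⁻¹) j))
        (Matrix.of fun i (_ : Unit) => -((M⁻¹ *ᵥ fun _ => (1 : ℝ)) i))
        M⁻¹ := by
  obtain ⟨A, B, C, D, rfl⟩ : ∃ A B C D, G = fromBlocks A B C D :=
    ⟨_, _, _, _, (fromBlocks_toBlocks G).symm⟩
  obtain ⟨-, -, hCB, hDsymm⟩ := isSymm_fromBlocks_iff.mp hGsymm
  obtain ⟨hC, hD⟩ := lower_blocks_of_fromBlocks_zero_mul_eq hMinv hG1
  have hA := corner_eq_of_fromBlocks_mulVec_one_eq_zero hG2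
  have hMinv_symm : M⁻¹.IsSymm := hD ▸ hDsymm
  have hvec : (fun _ => (1 : ℝ)) ᵥ* M⁻¹ = M⁻¹ *ᵥ fun _ => 1 := by
    rw [← mulVec_transpose, hMinv_symm.eq]
  subst hCB hD hC hA
  congr 1
  · ext ⟨⟩ ⟨⟩
    simp [dotProduct]
  · ext ⟨⟩ j
    simp [hvec]

/-- For `m ≥ 2` (here `m = e + 1` with `e ≥ 1`, and the index set is
`Unit ⊕ Fin e`, the `Unit` summand playing the role of index `0`) and `M` symmetric
and invertible, any symmetric `G` with `diag(0, M) · G = I - 𝟙 e₀ᵀ` and `G 𝟙 = 0`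
equals the block matrix `[[𝟙ᵀM⁻¹𝟙, -𝟙ᵀM⁻¹], [-M⁻¹𝟙, M⁻¹]]`. -/
theorem block_green_matrix_unique (e : ℕ) (he : 1 ≤ e)
    (M : Matrix (Fin e) (Fin e) ℝ)
    (hMsymm : M.IsSymm) (hMinv : IsUnit M.det)
    (G : Matrix (Unit ⊕ Fin e) (Unit ⊕ Fin e) ℝ)
    (hGsymm : G.IsSymm)
    (hG1 : Matrix.fromBlocks (0 : Matrix Unit Unit ℝ) 0 0 M * G =
      1 - Matrix.vecMulVec (fun _ => 1) (Pi.single (Sum.inl () : Unit ⊕ Fin e) 1))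
    (hG2 : G *ᵥ (fun _ => 1) = 0) :
    G = Matrix.fromBlocks
        (Matrix.of fun _ _ : Unit => (fun _ => (1 : ℝ)) ⬝ᵥ (M⁻¹ *ᵥ fun _ => 1))
        (Matrix.of fun (_ : Unit) j => -(((fun _ => (1 : ℝ)) ᵥ* M⁻¹) j))
        (Matrix.of fun i (_ : Unit) => -((M⁻¹ *ᵥ fun _ => (1 : ℝ)) i))
        M⁻¹ :=
  block_green_matrix_unique_general e M hMinv G hGsymm hG1 hG2
end

section
/- Let P ∈ ℝ^{d×d} with ℓ²-operator norm ‖P‖ < 1, and let α ∈ ℝ^d. Define the sequence y(t) by an arbitrary y(0) ∈ ℝ^d and y(t+1) = [P y(t) + α]₊ − [α]₊ for t ≥ 0. Then ‖y(t)‖ ≤ ‖P‖ᵗ ‖y(0)‖ for all t, and y(t) converges to 0 as t → ∞. -/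
open Matrix

/-- If `P` has ℓ²-operator norm `‖P‖ < 1` and
`y(t+1) = [P y(t) + α]₊ − [α]₊` (componentwise projection onto the nonnegative
orthant), then `‖y(t)‖ ≤ ‖P‖ᵗ ‖y(0)‖` for every `t`, and `y(t) → 0`. -/
theorem projected_iteration_converges (d : ℕ)
    (P : Matrix (Fin d) (Fin d) ℝ)
    (hP : ‖Matrix.toEuclideanCLM (𝕜 := ℝ) P‖ < 1)
    (α : Fin d → ℝ)
    (y : ℕ → EuclideanSpace ℝ (Fin d))
    (hy : ∀ t, y (t + 1) = fun h => max ((P *ᵥ y t) h + α h) 0 - max (α h) 0) :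
    (∀ t, ‖y t‖ ≤ ‖Matrix.toEuclideanCLM (𝕜 := ℝ) P‖ ^ t * ‖y 0‖) ∧
      Filter.Tendsto y Filter.atTop (nhds 0) := by
  set C := Matrix.toEuclideanCLM (𝕜 := ℝ) P with hC
  have happ : ∀ x : EuclideanSpace ℝ (Fin d), ∀ h, (C x) h = (P *ᵥ x) h := by
    intro x h
    have := Matrix.ofLp_toEuclideanCLM (𝕜 := ℝ) P x
    exact congrFun this h
  have hstep : ∀ t, ‖y (t + 1)‖ ≤ ‖C‖ * ‖y t‖ := by
    intro t
    have h1 : ‖y (t + 1)‖ ≤ ‖C (y t)‖ := by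
      rw [EuclideanSpace.norm_eq, EuclideanSpace.norm_eq]
      apply Real.sqrt_le_sqrt
      apply Finset.sum_le_sum
      intro i _
      have habs : |y (t + 1) i| ≤ |(C (y t)) i| := by
        rw [hy t, happ]
        calc |max ((P *ᵥ y t) i + α i) 0 - max (α i) 0|
            ≤ |((P *ᵥ y t) i + α i) - α i| := abs_max_sub_max_le_abs _ _ _
          _ = |(P *ᵥ y t) i| := by ring_nf
      calc ‖y (t + 1) i‖ ^ 2 = |y (t + 1) i| ^ 2 := by rw [Real.norm_eq_abs]
        _ ≤ |(C (y t)) i| ^ 2 := by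
            apply pow_le_pow_left₀ (abs_nonneg _) habs
        _ = ‖(C (y t)) i‖ ^ 2 := by rw [Real.norm_eq_abs]
    exact h1.trans (C.le_opNorm _)
  have hbound : ∀ t, ‖y t‖ ≤ ‖C‖ ^ t * ‖y 0‖ := by
    intro t
    induction t with
    | zero => rw [pow_zero, one_mul]
    | succ n ih =>
      calc ‖y (n + 1)‖ ≤ ‖C‖ * ‖y n‖ := hstep n
        _ ≤ ‖C‖ * (‖C‖ ^ n * ‖y 0‖) :=
            mul_le_mul_of_nonneg_left ih (norm_nonneg _)
        _ = ‖C‖ ^ (n + 1) * ‖y 0‖ := by ring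
  refine ⟨hbound, ?_⟩
  have htend : Filter.Tendsto (fun t => ‖C‖ ^ t * ‖y 0‖) Filter.atTop (nhds 0) := by
    have := tendsto_pow_atTop_nhds_zero_of_lt_one (norm_nonneg C) hP
    simpa only [zero_mul] using this.mul_const ‖y 0‖
  exact squeeze_zero_norm hbound htend
end

section
/- (Synchronous convergence.) Let d ≥ 1 and let M ∈ ℝ^{d×d} be symmetric positive definite with M_{hh} ≥ M_{hk} ≥ 0 for all h, k, and set D = max_h M_{hh}. Let θ ∈ ℝ with sin θ ≠ 0, U_N > 0, b ∈ ℝ, and c, r ∈ ℝ^d fixed vectors, and let γ satisfy 0 < γ < U_N² / (sin²θ · d · D). Define v̂(q) = c + (2 sin θ / U_N²) M q and the synchronous iteration λ(t+1) = [λ(t) + γ(b𝟙 − v̂(q(t)))]₊, q(t+1) = sin θ · λ(t+1) − r. If (q*, λ*) is a fixed point of this iteration, then for every initial condition (q(0), λ(0)) with λ(0) ≥ 0 the sequence (q(t), λ(t)) converges to (q*, λ*) as t → ∞. -/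
open Matrix Filter Topology
open scoped MatrixOrder

/-!
With `e(t) = λ(t) - λ*`, the projection `[·]₊` is `1`-Lipschitz in every coordinate, so for
`t ≥ 1` (once `q(t) = sin θ · λ(t) - r`) the error satisfies `‖e(t+1)‖ ≤ ‖(1 - a M) e(t)‖`
with `a = 2 γ sin²θ / U_N²`. By Gershgorin every eigenvalue of `M` lies in `(0, d D]`, so the
step-size bound puts the spectrum of `a M` inside `(0, 2)`; then `1 - a M` is a strict contraction
of the Euclidean norm, and `λ(t) → λ*` geometrically, hence also `q(t) → q*`.
-/

section Spectrum

variable {n : Type*} [Fintype n] [DecidableEq n]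

lemma Matrix.le_card_mul_of_mem_spectrum {A : Matrix n n ℝ} {D : ℝ} (hD : ∀ i j, |A i j| ≤ D)
    {μ : ℝ} (hμ : μ ∈ spectrum ℝ A) : μ ≤ Fintype.card n * D := by
  have hμ' : Module.End.HasEigenvalue (toLin' A) μ := by
    rwa [Module.End.hasEigenvalue_iff_mem_spectrum, spectrum_toLin']
  obtain ⟨k, hk⟩ := eigenvalue_mem_ball hμ'
  simp only [Metric.mem_closedBall, Real.dist_eq, Real.norm_eq_abs] at hk
  calc μ ≤ A k k + ∑ j ∈ Finset.univ.erase k, |A k j| := by linarith [le_abs_self (μ - A k k)]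
    _ ≤ ∑ j, |A k j| := by
        rw [← Finset.add_sum_erase _ _ (Finset.mem_univ k)]
        exact add_le_add_left (le_abs_self _) _
    _ ≤ ∑ _j : n, D := Finset.sum_le_sum fun j _ => hD k j
    _ = Fintype.card n * D := by simp

lemma Matrix.PosDef.mul_mem_Ioo_of_mem_spectrum {A : Matrix n n ℝ} (hA : A.PosDef) {a D : ℝ}
    (hD : ∀ i j, |A i j| ≤ D) (ha : 0 < a) (haD : a * (Fintype.card n * D) < 2) :
    ∀ μ ∈ spectrum ℝ A, a * μ ∈ Set.Ioo 0 2 := by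
  intro μ hμ
  exact ⟨mul_pos ha ((isStrictlyPositive_iff_posDef.2 hA).spectrum_pos hμ),
      (mul_le_mul_of_nonneg_left (A.le_card_mul_of_mem_spectrum hD hμ) ha.le).trans_lt haD⟩

omit [DecidableEq n] in
lemma Matrix.IsHermitian.dotProduct_mulVec_mulVec {A : Matrix n n ℝ} (hA : A.IsHermitian)
    (x : n → ℝ) : x ⬝ᵥ (A *ᵥ (A *ᵥ x)) = (A *ᵥ x) ⬝ᵥ (A *ᵥ x) := by
  have hT : Aᵀ = A := by simpa [conjTranspose_eq_transpose_of_trivial] using hA.eq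
  rw [dotProduct_mulVec, ← vecMul_transpose, hT]

lemma Matrix.IsHermitian.exists_dotProduct_sub_smul_mulVec_le {A : Matrix n n ℝ}
    (hA : A.IsHermitian) {a : ℝ} (hspec : ∀ μ ∈ spectrum ℝ A, a * μ ∈ Set.Ioo 0 2) :
    ∃ K < 1, ∀ x : n → ℝ, (x - a • A *ᵥ x) ⬝ᵥ (x - a • A *ᵥ x) ≤ K * (x ⬝ᵥ x) := by
  rcases isEmpty_or_nonempty n with hn | hn
  · exact ⟨0, zero_lt_one, fun x => by simp [dotProduct]⟩
  -- `‖x - a A x‖² = ‖x‖² - ⟪x, B x⟫` with `B = a A (2 - a A)`, whose spectrum is positive.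
  have hB : cfc (fun μ => a * μ * (2 - a * μ)) A = (2 * a) • A - a ^ 2 • (A * A) := by
    have : (fun μ : ℝ => a * μ * (2 - a * μ)) = fun μ => 2 * a * μ - a ^ 2 * (μ * μ) := by
      funext μ; ring
    rw [this, cfc_sub .., cfc_const_mul .., cfc_const_mul .., cfc_mul .., cfc_id' ..]
  have hBpos : ∀ ν ∈ spectrum ℝ ((2 * a) • A - a ^ 2 • (A * A)), 0 < ν := by
    rw [← hB, cfc_map_spectrum ..]
    rintro _ ⟨μ, hμ, rfl⟩
    obtain ⟨h0, h2⟩ := hspec μ hμ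
    exact mul_pos h0 (by linarith)
  obtain ⟨ε, hε, hεB⟩ := (CFC.exists_pos_algebraMap_le_iff (hB ▸ cfc_predicate _ A)).2 hBpos
  refine ⟨1 - ε, by linarith, fun x => ?_⟩
  have hx := (le_iff.1 hεB).dotProduct_mulVec_nonneg x
  simp only [star_trivial, Algebra.algebraMap_eq_smul_one, sub_mulVec, smul_mulVec, one_mulVec,
    ← mulVec_mulVec, dotProduct_sub, dotProduct_smul, smul_eq_mul,
    hA.dotProduct_mulVec_mulVec] at hx
  simp only [sub_dotProduct, dotProduct_sub, smul_dotProduct, dotProduct_smul, smul_eq_mul,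
    dotProduct_comm (A *ᵥ x) x]
  linear_combination hx

end Spectrum

section Iteration

variable {ι : Type*} [Fintype ι]

lemma dotProduct_self_le_of_abs_le {u w : ι → ℝ} (h : ∀ i, |u i| ≤ |w i|) :
    u ⬝ᵥ u ≤ w ⬝ᵥ w :=
  Finset.sum_le_sum fun i _ => by simpa only [sq] using sq_le_sq.2 (h i)

lemma tendsto_of_dotProduct_sub_self_le_mul {u : ℕ → ι → ℝ} {v : ι → ℝ} {K : ℝ} (hK : K < 1)
    (h : ∀ t, (u (t + 1) - v) ⬝ᵥ (u (t + 1) - v) ≤ K * ((u t - v) ⬝ᵥ (u t - v))) :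
    Tendsto u atTop (𝓝 v) := by
  set E : ℕ → ℝ := fun t => (u t - v) ⬝ᵥ (u t - v)
  have hE0 : ∀ t, 0 ≤ E t := fun t => Finset.sum_nonneg fun j _ => mul_self_nonneg _
  have hK' : ∀ t, E (t + 1) ≤ max K 0 * E t := fun t =>
    (h t).trans (mul_le_mul_of_nonneg_right (le_max_left _ _) (hE0 t))
  have hE : Tendsto E atTop (𝓝 0) := by
    refine squeeze_zero hE0 (fun t => le_geom (le_max_right _ _) t fun k _ => hK' k) ?_
    simpa using (tendsto_pow_atTop_nhds_zero_of_lt_one (le_max_right K 0)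
      (max_lt hK one_pos)).mul_const (E 0)
  refine tendsto_pi_nhds.2 fun i => tendsto_iff_norm_sub_tendsto_zero.2 ?_
  refine squeeze_zero (fun _ => norm_nonneg _) (fun t => Real.abs_le_sqrt ?_)
    (by simpa using hE.sqrt)
  rw [sq]
  exact Finset.single_le_sum (f := fun j => (u t - v) j * (u t - v) j)
    (fun j _ => mul_self_nonneg _) (Finset.mem_univ i)

lemma dotProduct_sub_self_le_of_projected_step (M : Matrix ι ι ℝ) {γ κ s b : ℝ} {c r : ι → ℝ}
    {x l q x' l' q' : ι → ℝ}
    (hx : x = fun i => max (l i + γ * (b - (c i + κ * (M *ᵥ q) i))) 0) (hq : q = s • l - r)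
    (hx' : x' = fun i => max (l' i + γ * (b - (c i + κ * (M *ᵥ q') i))) 0) (hq' : q' = s • l' - r) :
    (x - x') ⬝ᵥ (x - x') ≤
      ((l - l') - (γ * κ * s) • M *ᵥ (l - l')) ⬝ᵥ ((l - l') - (γ * κ * s) • M *ᵥ (l - l')) := by
  refine dotProduct_self_le_of_abs_le fun i => ?_
  have hMq : (M *ᵥ q) i - (M *ᵥ q') i = s * (M *ᵥ (l - l')) i := by
    simp only [hq, hq', mulVec_sub, mulVec_smul, Pi.sub_apply, Pi.smul_apply, smul_eq_mul,
      sub_sub_sub_cancel_right]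
    ring
  subst hx hx'
  refine (abs_max_sub_max_le_abs _ _ _).trans_eq (congrArg abs ?_)
  simp only [Pi.sub_apply, Pi.smul_apply, smul_eq_mul]
  linear_combination (-(γ * κ)) * hMq

end Iteration

theorem synchronous_convergence_general (d : ℕ)
    (M : Matrix (Fin d) (Fin d) ℝ) (hpd : M.PosDef)
    (hM : ∀ h k : Fin d, M h k ≤ M h h ∧ 0 ≤ M h k)
    (D : ℝ) (hD : IsGreatest (Set.range fun h => M h h) D)
    (θ UN b : ℝ) (hθ : Real.sin θ ≠ 0) (hUN : 0 < UN)
    (c r : Fin d → ℝ)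
    (γ : ℝ) (hγ : 0 < γ) (hγ2 : γ < UN ^ 2 / (Real.sin θ ^ 2 * d * D))
    (q l : ℕ → Fin d → ℝ)
    (hlrec : ∀ t, l (t + 1) =
      fun h => max (l t h + γ * (b - (c h + 2 * Real.sin θ / UN ^ 2 * (M *ᵥ q t) h))) 0)
    (hqrec : ∀ t, q (t + 1) = Real.sin θ • l (t + 1) - r)
    (qs ls : Fin d → ℝ)
    (hfixl : ls = fun h => max (ls h + γ * (b - (c h + 2 * Real.sin θ / UN ^ 2 * (M *ᵥ qs) h))) 0)
    (hfixq : qs = Real.sin θ • ls - r) :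
    Filter.Tendsto (fun t => (q t, l t)) Filter.atTop (nhds (qs, ls)) := by
  set a := γ * (2 * Real.sin θ / UN ^ 2) * Real.sin θ
  have ha : a = 2 * γ * Real.sin θ ^ 2 / UN ^ 2 := by ring
  have hsin := sq_pos_of_ne_zero hθ
  obtain ⟨h₀, hh₀⟩ := hD.1
  have hD0 : 0 < D := hh₀ ▸ hpd.diag_pos
  have hγ' : γ * (Real.sin θ ^ 2 * d * D) < UN ^ 2 :=
    (lt_div_iff₀ (by have := h₀.pos; positivity)).1 hγ2
  have hspec := hpd.mul_mem_Ioo_of_mem_spectrum (a := a) (D := D)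
    (fun h k => (abs_of_nonneg (hM h k).2).trans_le ((hM h k).1.trans (hD.2 ⟨h, rfl⟩)))
    (by rw [ha]; positivity)
    (by rw [Fintype.card_fin, ha, div_mul_eq_mul_div, div_lt_iff₀ (by positivity)]; linarith)
  obtain ⟨K, hK, hcontr⟩ := hpd.isHermitian.exists_dotProduct_sub_smul_mulVec_le hspec
  have hl : Tendsto l atTop (𝓝 ls) :=
    (tendsto_add_atTop_iff_nat 1).1 <| tendsto_of_dotProduct_sub_self_le_mul hK fun t =>
      (dotProduct_sub_self_le_of_projected_step M (hlrec (t + 1)) (hqrec t) hfixl hfixq).trans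
        (hcontr _)
  have hq : Tendsto q atTop (𝓝 qs) := by
    rw [← tendsto_add_atTop_iff_nat 1]
    simpa only [hqrec, ← hfixq] using
      (((tendsto_add_atTop_iff_nat 1).2 hl).const_smul (Real.sin θ)).sub_const r
  exact hq.prodMk_nhds hl

/-- **Synchronous convergence.** Let `M` be symmetric positive definite
with `M_{hh} ≥ M_{hk} ≥ 0`, `D = max_h M_{hh}`, `sin θ ≠ 0`, `U_N > 0`, and
`0 < γ < U_N² / (sin²θ · d · D)`. Consider the synchronous dual-ascent iteration
`λ(t+1) = [λ(t) + γ(b𝟙 − v̂(q(t)))]₊`, `q(t+1) = sin θ · λ(t+1) − r`, where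
`v̂(q) = c + (2 sin θ / U_N²) M q`. If `(q*, λ*)` is a fixed point of the iteration,
then from any initial condition with `λ(0) ≥ 0` the trajectory `(q(t), λ(t))`
converges to `(q*, λ*)`. -/
theorem synchronous_convergence (d : ℕ) (hd : 1 ≤ d)
    (M : Matrix (Fin d) (Fin d) ℝ) (hpd : M.PosDef)
    (hM : ∀ h k : Fin d, M h k ≤ M h h ∧ 0 ≤ M h k)
    (D : ℝ) (hD : IsGreatest (Set.range fun h => M h h) D)
    (θ UN b : ℝ) (hθ : Real.sin θ ≠ 0) (hUN : 0 < UN)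
    (c r : Fin d → ℝ)
    (γ : ℝ) (hγ : 0 < γ) (hγ2 : γ < UN ^ 2 / (Real.sin θ ^ 2 * d * D))
    (q l : ℕ → Fin d → ℝ)
    (hl0 : ∀ h : Fin d, 0 ≤ l 0 h)
    (hlrec : ∀ t, l (t + 1) =
      fun h => max (l t h + γ * (b - (c h + 2 * Real.sin θ / UN ^ 2 * (M *ᵥ q t) h))) 0)
    (hqrec : ∀ t, q (t + 1) = Real.sin θ • l (t + 1) - r)
    (qs ls : Fin d → ℝ)
    (hfixl : ls = fun h => max (ls h + γ * (b - (c h + 2 * Real.sin θ / UN ^ 2 * (M *ᵥ qs) h))) 0)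
    (hfixq : qs = Real.sin θ • ls - r) :
    Filter.Tendsto (fun t => (q t, l t)) Filter.atTop (nhds (qs, ls)) :=
  synchronous_convergence_general d M hpd hM D hD θ UN b hθ hUN c r γ hγ hγ2 q l hlrec hqrec qs ls
    hfixl hfixq
end

section
/- (Asynchronous convergence.) Let d ≥ 1 and let M ∈ ℝ^{d×d} be symmetric positive definite with M_{hh} ≥ M_{hk} ≥ 0 for all h, k, and set D = max_h M_{hh}. Let θ ∈ ℝ with sin θ ≠ 0, U_N > 0, b ∈ ℝ, c, r ∈ ℝ^d fixed vectors, and let γ satisfy 0 < γ < U_N² / (sin²θ · d · D). Define v̂(q) = c + (2 sin θ / U_N²) M q. Let (h(t))_{t≥0} be a sequence of independent random variables, each uniformly distributed on the index set {1,…,d}, on some probability space. Define random sequences (q(t), λ(t)) by arbitrary deterministic initial conditions q(0) ∈ ℝ^d and λ(0) ≥ 0, and for each t: λ_{h(t)}(t+1) = [λ_{h(t)}(t) + γ (b − v̂_{h(t)}(q(t)))]₊ and q_{h(t)}(t+1) = sin θ · λ_{h(t)}(t+1) − r_{h(t)}, while λ_k(t+1) = λ_k(t) and q_k(t+1) = q_k(t)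 for all k ≠ h(t). If (q*, λ*) is a fixed point of the corresponding synchronous iteration λ⁺ = [λ + γ(b𝟙 − v̂(q))]₊, q⁺ = sin θ · λ⁺ − r, then (q(t), λ(t)) converges to (q*, λ*) almost surely as t → ∞. -/
/-!
Once every agent has acted, `q = sin θ · λ - r`, and eliminating `q` turns the asynchronous dual
ascent into randomized projected coordinate descent for the dual quadratic
`f(λ) = ½ λᵀAλ - βᵀλ` on the nonnegative orthant, where `A = (2 sin²θ / U_N²) M` is positive
definite and `γ A_kk < 2`; a fixed point `λ*` of the synchronous iteration minimizes `f` there.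
Each update lowers `f` by a fixed multiple of the squared step, so the steps are square summable.
By the second Borel–Cantelli lemma, almost surely the agents act in the order `0, 1, …, d - 1`
during infinitely many blocks of `d` consecutive times. At the start of a late such block every
coordinate of the projected-gradient residual is small: the coordinate is refreshed within the
block, the iterate barely moves meanwhile, and the residual is Lipschitz. A residual error bound
then forces `f(λ(t)) ↓ f(λ*)`, and strong convexity gives `λ(t) → λ*`.
-/

open Matrix MeasureTheory ProbabilityTheory Filter Topology

lemma mul_max_sub_self_le {x g γ : ℝ} (hx : 0 ≤ x) (hγ : 0 < γ) :
    g * (max (x - γ * g) 0 - x) ≤ -(max (x - γ * g) 0 - x) ^ 2 / γ := by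
  rw [le_div_iff₀ hγ]
  rcases le_total 0 (x - γ * g) with h | h
  · rw [max_eq_left h]
    nlinarith
  · rw [max_eq_right h]
    nlinarith

lemma mul_mul_sub_le_abs_max_sub_mul {x z g γ : ℝ} (hx : 0 ≤ x) (hz : 0 ≤ z) (hγ : 0 < γ) :
    γ * g * (x - z) ≤ |max (x - γ * g) 0 - x| * (|x - z| + γ * |g|) := by
  rcases le_total 0 (x - γ * g) with h | h
  · have hg : γ * g * (x - z) ≤ γ * |g| * |x - z| := by
      calc γ * g * (x - z) ≤ |γ * g * (x - z)| := le_abs_self _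
        _ = γ * |g| * |x - z| := by rw [abs_mul, abs_mul, abs_of_pos hγ]
    rw [max_eq_left h, sub_sub_cancel_left, abs_neg, abs_mul, abs_of_pos hγ]
    nlinarith [mul_nonneg (mul_nonneg hγ.le (abs_nonneg g)) (mul_nonneg hγ.le (abs_nonneg g))]
  · have hg : γ * g ≤ γ * |g| := mul_le_mul_of_nonneg_left (le_abs_self g) hγ.le
    rw [max_eq_right h, zero_sub, abs_neg, abs_of_nonneg hx]
    nlinarith [mul_nonneg (show 0 ≤ γ * g by linarith) hz, mul_nonneg hx (abs_nonneg (x - z)),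
      mul_le_mul_of_nonneg_left hg hx]

lemma Matrix.PosDef.exists_pos_mul_sq_norm_le_dotProduct_mulVec {ι : Type*} [Fintype ι]
    {A : Matrix ι ι ℝ} (hA : A.PosDef) :
    ∃ μ > 0, ∀ x : ι → ℝ, μ * ‖x‖ ^ 2 ≤ x ⬝ᵥ A *ᵥ x := by
  rcases isEmpty_or_nonempty ι with hι | hι
  · exact ⟨1, one_pos, fun x => by simp [Subsingleton.elim x 0]⟩
  have hcont : Continuous fun x : ι → ℝ => x ⬝ᵥ A *ᵥ x :=
    continuous_id.dotProduct (continuous_const.matrix_mulVec continuous_id)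
  obtain ⟨z, hz, hmin⟩ := (isCompact_sphere (0 : ι → ℝ) 1).exists_isMinOn
    (NormedSpace.sphere_nonempty.2 zero_le_one) hcont.continuousOn
  have hz0 : z ≠ 0 := ne_zero_of_mem_unit_sphere ⟨z, hz⟩
  refine ⟨z ⬝ᵥ A *ᵥ z, hA.dotProduct_mulVec_pos hz0, fun x => ?_⟩
  rcases eq_or_ne x 0 with rfl | hx
  · simp
  have hnx : 0 < ‖x‖ := norm_pos_iff.2 hx
  have hy : ‖x‖⁻¹ • x ∈ Metric.sphere (0 : ι → ℝ) 1 := by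
    simp [norm_smul, hnx.ne']
  calc z ⬝ᵥ A *ᵥ z * ‖x‖ ^ 2 ≤ (‖x‖⁻¹ • x) ⬝ᵥ A *ᵥ (‖x‖⁻¹ • x) * ‖x‖ ^ 2 :=
        mul_le_mul_of_nonneg_right (hmin hy) (sq_nonneg _)
    _ = x ⬝ᵥ A *ᵥ x := by
        rw [mulVec_smul, smul_dotProduct, dotProduct_smul]
        simp only [smul_eq_mul]
        field_simp

lemma update_sub_self {ι : Type*} [DecidableEq ι] (x : ι → ℝ) (k : ι) (v : ℝ) :
    Function.update x k v - x = Pi.single k (v - x k) := by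
  ext j
  rcases eq_or_ne j k with rfl | hj <;> simp [*]

lemma nonneg_of_updates_nonneg {ι : Type*} {x : ℕ → ι → ℝ} {i : ℕ → ι} (hx0 : 0 ≤ x 0)
    (hupdate : ∀ t, 0 ≤ x (t + 1) (i t)) (hkeep : ∀ t k, k ≠ i t → x (t + 1) k = x t k)
    (t : ℕ) : 0 ≤ x t := by
  induction t with
  | zero => exact hx0
  | succ t ih =>
    intro k
    rcases eq_or_ne k (i t) with rfl | hk
    · exact hupdate t
    · rw [hkeep t k hk]; exact ih k

lemma eq_apply_of_exists_lt_eq {ι α β : Type*} {i : ℕ → ι} {q : ℕ → ι → α} {l : ℕ → ι → β}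
    {φ : ι → β → α} (hq : ∀ t, q (t + 1) (i t) = φ (i t) (l (t + 1) (i t)))
    (hq' : ∀ t k, k ≠ i t → q (t + 1) k = q t k) (hl' : ∀ t k, k ≠ i t → l (t + 1) k = l t k)
    {t : ℕ} {k : ι} (hk : ∃ u < t, i u = k) : q t k = φ k (l t k) := by
  induction t with
  | zero => obtain ⟨u, hu, -⟩ := hk; omega
  | succ t ih =>
    rcases eq_or_ne k (i t) with rfl | hne
    · exact hq t
    · rw [hq' t k hne, hl' t k hne]
      obtain ⟨u, hu, rfl⟩ := hk
      exact ih ⟨u, lt_of_le_of_ne (Nat.lt_succ_iff.1 hu) fun h => hne (h ▸ rfl), rfl⟩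

lemma tendsto_zero_of_add_mul_sq_le {u d : ℕ → ℝ} {κ m : ℝ} (hκ : 0 < κ) (hm : ∀ t, m ≤ u t)
    (hd : ∀ t, 0 ≤ d t) (h : ∀ t, u (t + 1) + κ * d t ^ 2 ≤ u t) :
    Tendsto d atTop (𝓝 0) := by
  have htelescope : ∀ n, u n + κ * ∑ t ∈ Finset.range n, d t ^ 2 ≤ u 0 := by
    intro n
    induction n with
    | zero => simp
    | succ n ih =>
      rw [Finset.sum_range_succ]
      linarith [h n]
  have hsummable : Summable fun t => d t ^ 2 := by
    refine summable_of_sum_range_le (c := (u 0 - m) / κ) (fun t => sq_nonneg _) fun n => ?_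
    rw [le_div_iff₀ hκ]
    linarith [htelescope n, hm n]
  simpa [Real.sqrt_sq (hd _)] using hsummable.tendsto_atTop_zero.sqrt

lemma tendsto_of_antitone_of_frequently_le {u : ℕ → ℝ} {c : ℝ} (hu : Antitone u)
    (hc : ∀ t, c ≤ u t) (h : ∀ ε > 0, ∃ᶠ t in atTop, u t ≤ c + ε) :
    Tendsto u atTop (𝓝 c) := by
  refine tendsto_order.2 ⟨fun a ha => Eventually.of_forall fun t => ha.trans_le (hc t),
    fun a ha => ?_⟩
  obtain ⟨s, hs⟩ := (h ((a - c) / 2) (by linarith)).exists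
  filter_upwards [eventually_ge_atTop s] with t hst
  linarith [hu hst]

lemma frequently_comp_add_atTop {p : ℕ → Prop} (h : ∃ᶠ n in atTop, p n) (k : ℕ) :
    ∃ᶠ n in atTop, p (n + k) :=
  (tendsto_sub_atTop_nat k).frequently ((h.and_eventually (eventually_ge_atTop k)).mono
    fun n ⟨hn, hkn⟩ => by rwa [Nat.sub_add_cancel hkn])

lemma tendsto_of_mul_sq_norm_sub_le {E : Type*} [SeminormedAddCommGroup E] {x : ℕ → E} {y : E}
    {u : ℕ → ℝ} {c μ : ℝ} (hμ : 0 < μ) (h : ∀ t, μ * ‖x t - y‖ ^ 2 ≤ u t - c)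
    (hu : Tendsto u atTop (𝓝 c)) : Tendsto x atTop (𝓝 y) := by
  have hsq : Tendsto (fun t => ‖x t - y‖ ^ 2) atTop (𝓝 0) := by
    refine squeeze_zero (fun t => sq_nonneg _) (fun t => ?_) (by
      simpa using (hu.sub_const c).div_const μ)
    rw [le_div_iff₀ hμ]
    linarith [h t]
  rw [tendsto_iff_norm_sub_tendsto_zero]
  simpa [Real.sqrt_sq (norm_nonneg _)] using hsq.sqrt

lemma frequently_norm_le_of_tendsto_dist {α ι : Type*} [PseudoMetricSpace α] [Fintype ι]
    {x : ℕ → α} {R : α → ι → ℝ} {K : NNReal} (hR : LipschitzWith K R) {i : ℕ → ι} {W : ℕ}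
    (hi : ∃ᶠ s in atTop, ∀ k, ∃ w < W, i (s + w) = k)
    (hxR : ∀ t, |R (x t) (i t)| ≤ dist (x t) (x (t + 1)))
    (hx : Tendsto (fun t => dist (x t) (x (t + 1))) atTop (𝓝 0)) :
    ∀ ε > 0, ∃ᶠ s in atTop, ‖R (x s)‖ ≤ ε := by
  intro ε hε
  set δ := ε / (1 + K * W) with hδ
  have hδpos : 0 < δ := by positivity
  obtain ⟨N, hN⟩ := eventually_atTop.1 (hx.eventually (ge_mem_nhds hδpos))
  refine (hi.and_eventually (eventually_ge_atTop N)).mono fun s ⟨hwindow, hsN⟩ => ?_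
  refine (pi_norm_le_iff_of_nonneg hε.le).2 fun k => ?_
  obtain ⟨w, hwW, hwk⟩ := hwindow k
  have hmove : dist (x s) (x (s + w)) ≤ W * δ :=
    calc dist (x s) (x (s + w)) ≤ ∑ u ∈ Finset.range w, dist (x (s + u)) (x (s + u + 1)) :=
          dist_le_range_sum_dist (fun u => x (s + u)) w
      _ ≤ ∑ _u ∈ Finset.range w, δ := Finset.sum_le_sum fun u _ => hN (s + u) (by omega)
      _ ≤ W * δ := by
          rw [Finset.sum_const, Finset.card_range, nsmul_eq_mul]
          gcongr
  have hlast : |R (x (s + w)) k| ≤ δ := hwk ▸ (hxR (s + w)).trans (hN (s + w) (by omega))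
  have hlip : |R (x s) k - R (x (s + w)) k| ≤ K * (W * δ) :=
    calc |R (x s) k - R (x (s + w)) k| ≤ dist (R (x s)) (R (x (s + w))) := by
          rw [← Real.dist_eq]; exact dist_le_pi_dist _ _ k
      _ ≤ K * dist (x s) (x (s + w)) := hR.dist_le_mul _ _
      _ ≤ K * (W * δ) := by gcongr
  calc ‖R (x s) k‖ ≤ |R (x s) k - R (x (s + w)) k| + |R (x (s + w)) k| := by
        rw [Real.norm_eq_abs]; linarith [abs_sub_abs_le_abs_sub (R (x s) k) (R (x (s + w)) k)]
    _ ≤ K * (W * δ) + δ := add_le_add hlip hlast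
    _ = ε := by rw [hδ]; field_simp; ring

section ProjectedGradient

variable {ι : Type*} [Fintype ι] (A : Matrix ι ι ℝ) (β : ι → ℝ) (γ : ℝ)

noncomputable def quadObjective (x : ι → ℝ) : ℝ := x ⬝ᵥ A *ᵥ x / 2 - β ⬝ᵥ x

noncomputable def projGrad (x : ι → ℝ) : ι → ℝ := fun k => max (x k - γ * (A *ᵥ x - β) k) 0

variable {A β γ}

lemma quadObjective_sub (hA : A.IsSymm) (x y : ι → ℝ) :
    quadObjective A β y - quadObjective A β x
      = (A *ᵥ x - β) ⬝ᵥ (y - x) + (y - x) ⬝ᵥ A *ᵥ (y - x) / 2 := by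
  have hxy : x ⬝ᵥ A *ᵥ y = y ⬝ᵥ A *ᵥ x := by
    rw [dotProduct_mulVec, ← mulVec_transpose, hA.eq, dotProduct_comm]
  have hquad : (y - x) ⬝ᵥ A *ᵥ (y - x) = y ⬝ᵥ A *ᵥ y - 2 * (y ⬝ᵥ A *ᵥ x) + x ⬝ᵥ A *ᵥ x := by
    simp only [mulVec_sub, dotProduct_sub, sub_dotProduct, hxy]
    ring
  have hlin : (A *ᵥ x - β) ⬝ᵥ (y - x) = y ⬝ᵥ A *ᵥ x - x ⬝ᵥ A *ᵥ x - β ⬝ᵥ y + β ⬝ᵥ x := by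
    simp only [sub_dotProduct, dotProduct_sub, dotProduct_comm (A *ᵥ x)]
    ring
  rw [hquad, hlin, quadObjective, quadObjective]
  ring

lemma quadObjective_update [DecidableEq ι] (hA : A.IsSymm) (x : ι → ℝ) (k : ι) (v : ℝ) :
    quadObjective A β (Function.update x k v) - quadObjective A β x
      = (A *ᵥ x - β) k * (v - x k) + A k k * (v - x k) ^ 2 / 2 := by
  rw [quadObjective_sub hA, update_sub_self, dotProduct_single, mulVec_single, single_dotProduct,
    Pi.smul_apply, col_apply, op_smul_eq_mul]
  ring

lemma quadObjective_update_projGrad_le [DecidableEq ι] (hA : A.IsSymm) (hγ : 0 < γ) {D : ℝ}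
    (hD : ∀ k, A k k ≤ D) {x : ι → ℝ} (hx : 0 ≤ x) (k : ι) :
    quadObjective A β (Function.update x k (projGrad A β γ x k))
      + (1 / γ - D / 2) * (projGrad A β γ x k - x k) ^ 2 ≤ quadObjective A β x := by
  have hstep := quadObjective_update (β := β) hA x k (projGrad A β γ x k)
  have hdescent : (A *ᵥ x - β) k * (projGrad A β γ x k - x k)
      ≤ -(1 / γ) * (projGrad A β γ x k - x k) ^ 2 :=
    by unfold projGrad; exact (mul_max_sub_self_le (hx k) hγ).trans_eq (by ring)
  have hcurv : A k k * (projGrad A β γ x k - x k) ^ 2 ≤ D * (projGrad A β γ x k - x k) ^ 2 :=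
    mul_le_mul_of_nonneg_right (hD k) (sq_nonneg _)
  linarith

lemma nonneg_of_projGrad_eq {xs : ι → ℝ} (h : projGrad A β γ xs = xs) : 0 ≤ xs := by
  rw [← h]
  exact fun k => le_max_right _ _

lemma grad_dotProduct_sub_nonneg (hγ : 0 < γ) {xs : ι → ℝ} (h : projGrad A β γ xs = xs)
    {y : ι → ℝ} (hy : 0 ≤ y) : 0 ≤ (A *ᵥ xs - β) ⬝ᵥ (y - xs) := by
  refine Finset.sum_nonneg fun k _ => ?_
  have hk : max (xs k - γ * (A *ᵥ xs - β) k) 0 = xs k := congrFun h k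
  rcases le_total (xs k - γ * (A *ᵥ xs - β) k) 0 with hle | hle
  · rw [max_eq_right hle] at hk
    show 0 ≤ (A *ᵥ xs - β) k * (y k - xs k)
    rw [← hk, sub_zero]
    exact mul_nonneg (by nlinarith) (hy k)
  · rw [max_eq_left hle] at hk
    have hgrad : (A *ᵥ xs - β) k = 0 :=
      (mul_eq_zero.1 (show γ * (A *ᵥ xs - β) k = 0 by linarith)).resolve_left hγ.ne'
    rw [hgrad, zero_mul]

lemma mul_sq_norm_sub_le_quadObjective_sub (hA : A.IsSymm) {μ : ℝ}
    (hμ : ∀ x, μ * ‖x‖ ^ 2 ≤ x ⬝ᵥ A *ᵥ x) (hγ : 0 < γ) {xs : ι → ℝ}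
    (h : projGrad A β γ xs = xs) {y : ι → ℝ} (hy : 0 ≤ y) :
    μ / 2 * ‖y - xs‖ ^ 2 ≤ quadObjective A β y - quadObjective A β xs := by
  rw [quadObjective_sub hA]
  nlinarith [grad_dotProduct_sub_nonneg hγ h hy, hμ (y - xs)]

lemma mul_quadObjective_sub_le (hA : A.PosSemidef) (hγ : 0 < γ) {xs : ι → ℝ}
    (h : projGrad A β γ xs = xs) {x : ι → ℝ} (hx : 0 ≤ x) :
    γ * (quadObjective A β x - quadObjective A β xs)
      ≤ Fintype.card ι * ‖projGrad A β γ x - x‖ * (‖x - xs‖ + γ * ‖A *ᵥ x - β‖) := by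
  have hconvex : quadObjective A β x - quadObjective A β xs ≤ (A *ᵥ x - β) ⬝ᵥ (x - xs) := by
    have := quadObjective_sub (β := β) (isHermitian_iff_isSymm.1 hA.isHermitian) x xs
    have hpsd := hA.dotProduct_mulVec_nonneg (xs - x)
    rw [show (A *ᵥ x - β) ⬝ᵥ (xs - x) = -((A *ᵥ x - β) ⬝ᵥ (x - xs)) by
      rw [← dotProduct_neg, neg_sub]] at this
    simp only [star_trivial] at hpsd
    linarith
  have hcoord : ∀ k, γ * ((A *ᵥ x - β) k * (x - xs) k)
      ≤ ‖projGrad A β γ x - x‖ * (‖x - xs‖ + γ * ‖A *ᵥ x - β‖) := by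
    intro k
    rw [← mul_assoc]
    refine (mul_mul_sub_le_abs_max_sub_mul (hx k) (nonneg_of_projGrad_eq h k) hγ).trans ?_
    gcongr
    · exact norm_le_pi_norm (projGrad A β γ x - x) k
    · exact norm_le_pi_norm (x - xs) k
    · exact norm_le_pi_norm (A *ᵥ x - β) k
  calc γ * (quadObjective A β x - quadObjective A β xs)
      ≤ ∑ k, γ * ((A *ᵥ x - β) k * (x - xs) k) := by
        rw [← Finset.mul_sum]
        exact mul_le_mul_of_nonneg_left hconvex hγ.le
    _ ≤ ∑ _k : ι, ‖projGrad A β γ x - x‖ * (‖x - xs‖ + γ * ‖A *ᵥ x - β‖) :=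
        Finset.sum_le_sum fun k _ => hcoord k
    _ = _ := by simp [mul_assoc]

open scoped Matrix.Norms.Operator in
lemma lipschitzWith_projGrad_sub_self :
    LipschitzWith (2 + ‖γ‖₊ * ‖A‖₊) fun x => projGrad A β γ x - x := by
  refine LipschitzWith.of_dist_le_mul fun x y => ?_
  rw [dist_eq_norm, dist_eq_norm]
  refine (pi_norm_le_iff_of_nonneg (by positivity)).2 fun k => ?_
  have hmul : |(A *ᵥ (x - y)) k| ≤ ‖A‖ * ‖x - y‖ :=
    (norm_le_pi_norm (A *ᵥ (x - y)) k).trans (linfty_opNorm_mulVec A (x - y))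
  have hcoord : |x k - y k| ≤ ‖x - y‖ := norm_le_pi_norm (x - y) k
  have hproj : |projGrad A β γ x k - projGrad A β γ y k|
      ≤ |x k - y k| + |γ| * |(A *ᵥ (x - y)) k| :=
    calc |projGrad A β γ x k - projGrad A β γ y k|
        ≤ |(x k - γ * (A *ᵥ x - β) k) - (y k - γ * (A *ᵥ y - β) k)| :=
          abs_max_sub_max_le_abs _ _ 0
      _ = |(x k - y k) - γ * (A *ᵥ (x - y)) k| := by
          rw [mulVec_sub]; congr 1; simp only [Pi.sub_apply]; ring
      _ ≤ |x k - y k| + |γ| * |(A *ᵥ (x - y)) k| := by rw [← abs_mul]; exact abs_sub _ _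
  calc ‖(projGrad A β γ x - x - (projGrad A β γ y - y)) k‖
      = |(projGrad A β γ x k - projGrad A β γ y k) - (x k - y k)| := by
        rw [Real.norm_eq_abs]; congr 1; simp only [Pi.sub_apply]; ring
    _ ≤ |projGrad A β γ x k - projGrad A β γ y k| + |x k - y k| := abs_sub _ _
    _ ≤ (2 + ‖γ‖₊ * ‖A‖₊ : NNReal) * ‖x - y‖ := by
        simp only [NNReal.coe_add, NNReal.coe_mul, coe_nnnorm, NNReal.coe_ofNat, Real.norm_eq_abs]
        nlinarith [mul_le_mul_of_nonneg_left hmul (abs_nonneg γ)]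

open scoped Matrix.Norms.Operator in
lemma tendsto_quadObjective_of_frequently_norm_le (hA : A.PosSemidef) (hγ : 0 < γ) {xs : ι → ℝ}
    (hxs : projGrad A β γ xs = xs) {x : ℕ → ι → ℝ} (hx : ∀ t, 0 ≤ x t)
    (hanti : Antitone fun t => quadObjective A β (x t)) {B : ℝ} (hB : ∀ t, ‖x t - xs‖ ≤ B)
    (hR : ∀ ε > 0, ∃ᶠ s in atTop, ‖projGrad A β γ (x s) - x s‖ ≤ ε) :
    Tendsto (fun t => quadObjective A β (x t)) atTop (𝓝 (quadObjective A β xs)) := by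
  have hmin : ∀ t, quadObjective A β xs ≤ quadObjective A β (x t) := fun t => by
    simpa using mul_sq_norm_sub_le_quadObjective_sub (μ := 0)
      (isHermitian_iff_isSymm.1 hA.isHermitian) (by simpa using hA.dotProduct_mulVec_nonneg) hγ
      hxs (hx t)
  set C := B + γ * (‖A‖ * B + ‖A *ᵥ xs - β‖)
  have hC : ∀ t, ‖x t - xs‖ + γ * ‖A *ᵥ x t - β‖ ≤ C := by
    intro t
    have hgrad : ‖A *ᵥ x t - β‖ ≤ ‖A‖ * B + ‖A *ᵥ xs - β‖ :=
      calc ‖A *ᵥ x t - β‖ = ‖A *ᵥ (x t - xs) + (A *ᵥ xs - β)‖ := by rw [mulVec_sub]; abel_nf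
        _ ≤ ‖A *ᵥ (x t - xs)‖ + ‖A *ᵥ xs - β‖ := norm_add_le _ _
        _ ≤ ‖A‖ * B + ‖A *ᵥ xs - β‖ := by
            gcongr
            exact (linfty_opNorm_mulVec _ _).trans (by gcongr; exact hB t)
    linarith [hB t, mul_le_mul_of_nonneg_left hgrad hγ.le]
  have hC0 : 0 ≤ C := (by positivity : 0 ≤ ‖x 0 - xs‖ + γ * ‖A *ᵥ x 0 - β‖).trans (hC 0)
  set K := (Fintype.card ι : ℝ) * C
  refine tendsto_of_antitone_of_frequently_le hanti hmin fun ε hε => ?_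
  refine (hR (ε * γ / (K + 1)) (by positivity)).mono fun s hs => ?_
  have hbound := mul_quadObjective_sub_le hA hγ hxs (hx s)
  have hK : K * (ε * γ / (K + 1)) ≤ ε * γ := by
    rw [mul_div_assoc', div_le_iff₀ (by positivity)]
    nlinarith [mul_pos hε hγ]
  have : γ * (quadObjective A β (x s) - quadObjective A β xs) ≤ γ * ε :=
    calc _ ≤ _ := hbound
      _ ≤ Fintype.card ι * (ε * γ / (K + 1)) * C := by gcongr; exact hC s
      _ = K * (ε * γ / (K + 1)) := by ring
      _ ≤ γ * ε := by linarith
  linarith [le_of_mul_le_mul_left this hγ]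

variable [DecidableEq ι] {i : ℕ → ι} {x : ℕ → ι → ℝ}

lemma dist_update_projGrad
    (hx : ∀ t, x (t + 1) = Function.update (x t) (i t) (projGrad A β γ (x t) (i t))) (t : ℕ) :
    dist (x t) (x (t + 1)) = |projGrad A β γ (x t) (i t) - x t (i t)| := by
  rw [hx t, dist_comm, dist_eq_norm, update_sub_self, Pi.norm_single, Real.norm_eq_abs]

theorem tendsto_of_update_projGrad (hA : A.PosDef) (hγ : 0 < γ) {D : ℝ}
    (hD : ∀ k, A k k ≤ D) (hγD : γ * D < 2) {W : ℕ}
    (hi : ∃ᶠ s in atTop, ∀ k, ∃ w < W, i (s + w) = k) (hx0 : 0 ≤ x 0)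
    (hx : ∀ t, x (t + 1) = Function.update (x t) (i t) (projGrad A β γ (x t) (i t)))
    {xs : ι → ℝ} (hxs : projGrad A β γ xs = xs) :
    Tendsto x atTop (𝓝 xs) := by
  have hsymm : A.IsSymm := isHermitian_iff_isSymm.1 hA.isHermitian
  obtain ⟨μ, hμ, hcoercive⟩ := hA.exists_pos_mul_sq_norm_le_dotProduct_mulVec
  set f := quadObjective A β
  have hnonneg := nonneg_of_updates_nonneg hx0
    (fun t => by rw [hx t, Function.update_self]; exact le_max_right _ _)
    (fun t k hk => by rw [hx t, Function.update_of_ne hk])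
  have hgap : ∀ t, μ / 2 * ‖x t - xs‖ ^ 2 ≤ f (x t) - f xs := fun t =>
    mul_sq_norm_sub_le_quadObjective_sub hsymm hcoercive hγ hxs (hnonneg t)
  have hmin : ∀ t, f xs ≤ f (x t) := fun t => by nlinarith [hgap t, sq_nonneg ‖x t - xs‖]
  have hκ : 0 < 1 / γ - D / 2 := by
    rw [sub_pos, div_lt_div_iff₀ two_pos hγ]; linarith
  have hdescent : ∀ t, f (x (t + 1)) + (1 / γ - D / 2) * dist (x t) (x (t + 1)) ^ 2 ≤ f (x t) := by
    intro t
    rw [dist_update_projGrad hx, sq_abs, hx t]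
    exact quadObjective_update_projGrad_le hsymm hγ hD (hnonneg t) _
  have hanti : Antitone fun t => f (x t) :=
    antitone_nat_of_succ_le fun t => by nlinarith [hdescent t, sq_nonneg (dist (x t) (x (t + 1)))]
  -- `a ≤ a ^ 2 + 1` turns the quadratic growth bound into a bound on `‖x t - xs‖`
  have hbounded : ∀ t, ‖x t - xs‖ ≤ 2 / μ * (f (x 0) - f xs) + 1 := by
    intro t
    have : μ / 2 * ‖x t - xs‖ ^ 2 ≤ f (x 0) - f xs := (hgap t).trans (by linarith [hanti t.zero_le])
    have : ‖x t - xs‖ ^ 2 ≤ 2 / μ * (f (x 0) - f xs) := by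
      rw [div_mul_eq_mul_div, le_div_iff₀ hμ]; linarith
    nlinarith [sq_nonneg (‖x t - xs‖ - 1)]
  have hresidual := frequently_norm_le_of_tendsto_dist lipschitzWith_projGrad_sub_self hi
    (fun t => (dist_update_projGrad hx t).ge)
    (tendsto_zero_of_add_mul_sq_le hκ hmin (fun _ => dist_nonneg) hdescent)
  exact tendsto_of_mul_sq_norm_sub_le (by positivity) hgap
    (tendsto_quadObjective_of_frequently_norm_le hA.posSemidef hγ hxs hnonneg hanti hbounded
      hresidual)

theorem tendsto_of_eventually_update_projGrad (hA : A.PosDef) (hγ : 0 < γ) {D : ℝ}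
    (hD : ∀ k, A k k ≤ D) (hγD : γ * D < 2) {W : ℕ}
    (hi : ∃ᶠ s in atTop, ∀ k, ∃ w < W, i (s + w) = k) (hx0 : ∀ t, 0 ≤ x t) {T : ℕ}
    (hx : ∀ t ≥ T, x (t + 1) = Function.update (x t) (i t) (projGrad A β γ (x t) (i t)))
    {xs : ι → ℝ} (hxs : projGrad A β γ xs = xs) :
    Tendsto x atTop (𝓝 xs) :=
  (tendsto_add_atTop_iff_nat T).1 <| tendsto_of_update_projGrad (i := fun t => i (t + T))
    (x := fun t => x (t + T)) hA hγ hD hγD ((frequently_comp_add_atTop hi T).mono fun s hs k => by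
      simpa only [add_right_comm] using hs k) (hx0 _)
    (fun t => by rw [add_right_comm]; exact hx (t + T) (by omega)) hxs

end ProjectedGradient

theorem ae_frequently_forall_Ico_eq {Ω ι : Type*} [MeasurableSpace Ω] {P : Measure Ω}
    [IsProbabilityMeasure P] [MeasurableSpace ι] [MeasurableSingletonClass ι]
    {X : ℕ → Ω → ι} (hmeas : ∀ t, Measurable (X t)) (hindep : iIndepFun X P)
    {ε : ENNReal} (hε : ε ≠ 0) (hlow : ∀ t a, ε ≤ P (X t ⁻¹' {a})) (τ : ℕ → ι) (n : ℕ) :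
    ∀ᵐ ω ∂P, ∃ᶠ j in atTop, ∀ t ∈ Finset.Ico (j * n) (j * n + n), X t ω = τ t := by
  set block : ℕ → Finset ℕ := fun j => Finset.Ico (j * n) (j * n + n)
  set E : ℕ → Set Ω := fun j => ⋂ t ∈ block j, X t ⁻¹' {τ t}
  have hprod : ∀ S : Finset ℕ, P (⋂ t ∈ S, X t ⁻¹' {τ t}) = ∏ t ∈ S, P (X t ⁻¹' {τ t}) :=
    fun S => hindep.meas_biInter fun t _ => ⟨{τ t}, measurableSet_singleton _, rfl⟩
  have hEmeas : ∀ j, MeasurableSet (E j) := fun j =>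
    .biInter (Set.to_countable _) fun t _ => hmeas t (measurableSet_singleton _)
  have hblock : ∀ j t, t ∈ block j → t / n = j := fun j t ht => by
    simp only [block, Finset.mem_Ico] at ht
    exact Nat.div_eq_of_lt_le ht.1 (by rw [Nat.succ_mul]; exact ht.2)
  have hindepE : iIndepSet E P := by
    refine (iIndepSet_iff_meas_biInter hEmeas).2 fun J => ?_
    have hdisj : (J : Set ℕ).PairwiseDisjoint block := fun j _ j' _ hne =>
      Finset.disjoint_left.2 fun t h h' => hne ((hblock j t h).symm.trans (hblock j' t h'))
    simp only [E]
    rw [← Finset.set_biInter_biUnion, hprod, Finset.prod_biUnion hdisj]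
    exact Finset.prod_congr rfl fun j _ => (hprod _).symm
  have hsum : ∑' j, P (E j) = ⊤ := by
    refine top_unique ((ENNReal.tsum_const_eq_top_of_ne_zero (pow_ne_zero n hε)).symm.le.trans
      (ENNReal.tsum_le_tsum fun j => ?_))
    rw [hprod]
    simpa [block] using Finset.pow_card_le_prod (block j) _ ε fun t _ => hlow t (τ t)
  have hlimsup : ∀ᵐ ω ∂P, ω ∈ limsup E atTop := by
    rw [ae_mem_iff_measure_eq (MeasurableSet.measurableSet_limsup hEmeas).nullMeasurableSet,
      measure_limsup_eq_one hEmeas hindepE hsum, measure_univ]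
  filter_upwards [hlimsup] with ω hω
  exact (mem_limsup_iff_frequently_mem.1 hω).mono fun j hj t ht =>
    Set.mem_iInter₂.1 hj t ht

theorem ae_frequently_forall_exists_lt_eq {Ω : Type*} [MeasurableSpace Ω] {P : Measure Ω}
    [IsProbabilityMeasure P] {d : ℕ} (hd : 0 < d) {X : ℕ → Ω → Fin d}
    (hmeas : ∀ t, Measurable (X t)) (hindep : iIndepFun X P) {ε : ENNReal} (hε : ε ≠ 0)
    (hlow : ∀ t a, ε ≤ P (X t ⁻¹' {a})) :
    ∀ᵐ ω ∂P, ∃ᶠ s in atTop, ∀ k, ∃ w < d, X (s + w) ω = k := by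
  filter_upwards [ae_frequently_forall_Ico_eq hmeas hindep hε hlow
    (fun t => ⟨t % d, Nat.mod_lt _ hd⟩) d] with ω hω
  refine (tendsto_atTop_mono (fun j => Nat.le_mul_of_pos_right j hd) tendsto_id).frequently
    (hω.mono fun j hj k => ⟨k, k.isLt, ?_⟩)
  rw [hj _ (by simp [Finset.mem_Ico])]
  ext
  exact (Nat.mul_comm j d ▸ Nat.mul_add_mod d j k).trans (Nat.mod_eq_of_lt k.isLt)

lemma mul_two_mul_sq_div_sq_mul_lt_two {γ s U D : ℝ} {d : ℕ} (hd : 1 ≤ d) (hs : s ≠ 0)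
    (hU : U ≠ 0) (hD : 0 < D) (hγ : γ < U ^ 2 / (s ^ 2 * d * D)) :
    γ * (2 * s ^ 2 / U ^ 2 * D) < 2 := by
  have hd1 : (1 : ℝ) ≤ d := by exact_mod_cast hd
  have hsD : 0 < s ^ 2 * D := by positivity
  rw [lt_div_iff₀ (by positivity)] at hγ
  rw [show γ * (2 * s ^ 2 / U ^ 2 * D) = 2 * (γ * (s ^ 2 * D)) / U ^ 2 by ring,
    div_lt_iff₀ (by positivity)]
  rcases le_or_gt γ 0 with hγ0 | hγ0
  · nlinarith [sq_nonneg U, mul_nonpos_of_nonpos_of_nonneg hγ0 hsD.le]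
  · nlinarith [mul_le_mul_of_nonneg_left hd1 (mul_pos hγ0 hsD).le]

lemma max_add_dual_step_eq_projGrad {ι : Type*} [Fintype ι] (M : Matrix ι ι ℝ)
    (s U b γ : ℝ) (c r x : ι → ℝ) (k : ι) :
    max (x k + γ * (b - (c k + 2 * s / U ^ 2 * (M *ᵥ (s • x - r)) k))) 0
      = projGrad ((2 * s ^ 2 / U ^ 2) • M) (fun k => b - c k + 2 * s / U ^ 2 * (M *ᵥ r) k) γ x
          k := by
  simp only [projGrad, mulVec_sub, mulVec_smul, smul_mulVec, Pi.sub_apply, Pi.smul_apply,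
    smul_eq_mul]
  ring_nf

lemma dual_ascent_eq_update_projGrad {ι : Type*} [Fintype ι] [DecidableEq ι]
    (M : Matrix ι ι ℝ) (s U b γ : ℝ) (c r : ι → ℝ) {i : ℕ → ι} {q l : ℕ → ι → ℝ}
    (hlrec : ∀ t, l (t + 1) (i t) =
      max (l t (i t) + γ * (b - (c (i t) + 2 * s / U ^ 2 * (M *ᵥ q t) (i t)))) 0)
    (hlrec' : ∀ t k, k ≠ i t → l (t + 1) k = l t k)
    (hqrec : ∀ t, q (t + 1) (i t) = s * l (t + 1) (i t) - r (i t))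
    (hqrec' : ∀ t k, k ≠ i t → q (t + 1) k = q t k)
    {s₀ W : ℕ} (hvisit : ∀ k, ∃ w < W, i (s₀ + w) = k) {t : ℕ} (ht : s₀ + W ≤ t) :
    q t = s • l t - r ∧ l (t + 1) = Function.update (l t) (i t)
      (projGrad ((2 * s ^ 2 / U ^ 2) • M) (fun k => b - c k + 2 * s / U ^ 2 * (M *ᵥ r) k) γ
        (l t) (i t)) := by
  have hq : q t = s • l t - r := funext fun k => by
    obtain ⟨w, hw, hwk⟩ := hvisit k
    exact eq_apply_of_exists_lt_eq (φ := fun k v => s * v - r k) hqrec hqrec' hlrec'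
      ⟨s₀ + w, by omega, hwk⟩
  refine ⟨hq, (Function.update_eq_iff.2 ⟨?_, fun k hk => (hlrec' t k hk).symm⟩).symm⟩
  rw [hlrec, hq, max_add_dual_step_eq_projGrad]

theorem asynchronous_convergence_general (d : ℕ) (hd : 1 ≤ d)
    (M : Matrix (Fin d) (Fin d) ℝ) (hpd : M.PosDef)
    (D : ℝ) (hD : IsGreatest (Set.range fun h => M h h) D)
    (θ UN b : ℝ) (hθ : Real.sin θ ≠ 0) (hUN : 0 < UN)
    (c r : Fin d → ℝ)
    (γ : ℝ) (hγ : 0 < γ) (hγ2 : γ < UN ^ 2 / (Real.sin θ ^ 2 * d * D))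
    (Ω : Type*) [MeasurableSpace Ω] (P : Measure Ω) [IsProbabilityMeasure P]
    (h : ℕ → Ω → Fin d) (hmeas : ∀ t, Measurable (h t))
    (hindep : iIndepFun h P)
    (hunif : ∀ t (a : Fin d), P {ω | h t ω = a} = (d : ENNReal)⁻¹)
    (q l : ℕ → Ω → Fin d → ℝ)
    (l0 : Fin d → ℝ) (hl0nonneg : ∀ k : Fin d, 0 ≤ l0 k)
    (hl0 : ∀ ω, l 0 ω = l0)
    (hlrec : ∀ t ω, l (t + 1) ω (h t ω) =
      max (l t ω (h t ω) +
        γ * (b - (c (h t ω) + 2 * Real.sin θ / UN ^ 2 * (M *ᵥ q t ω) (h t ω)))) 0)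
    (hlrec' : ∀ t ω (k : Fin d), k ≠ h t ω → l (t + 1) ω k = l t ω k)
    (hqrec : ∀ t ω, q (t + 1) ω (h t ω) = Real.sin θ * l (t + 1) ω (h t ω) - r (h t ω))
    (hqrec' : ∀ t ω (k : Fin d), k ≠ h t ω → q (t + 1) ω k = q t ω k)
    (qs ls : Fin d → ℝ)
    (hfixl : ls = fun k => max (ls k + γ * (b - (c k + 2 * Real.sin θ / UN ^ 2 * (M *ᵥ qs) k))) 0)
    (hfixq : qs = Real.sin θ • ls - r) :
    ∀ᵐ ω ∂P, Filter.Tendsto (fun t => (q t ω, l t ω)) Filter.atTop (nhds (qs, ls)) := by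
  set a := 2 * Real.sin θ ^ 2 / UN ^ 2
  have ha : 0 < a := by positivity
  have hDpos : 0 < D := by obtain ⟨k, hk⟩ := hD.1; exact hk ▸ hpd.diag_pos
  have hdiag : ∀ k, (a • M) k k ≤ a * D := fun k => by
    simpa using mul_le_mul_of_nonneg_left (hD.2 ⟨k, rfl⟩) ha.le
  have hls : projGrad (a • M) (fun k => b - c k + 2 * Real.sin θ / UN ^ 2 * (M *ᵥ r) k) γ ls
      = ls := funext fun k => by
    have := congrFun hfixl k
    rw [hfixq, max_add_dual_step_eq_projGrad] at this
    exact this.symm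
  filter_upwards [ae_frequently_forall_exists_lt_eq hd hmeas hindep
    (ENNReal.inv_ne_zero.2 (ENNReal.natCast_ne_top d)) fun t a => (hunif t a).ge] with ω hω
  obtain ⟨s₀, hs₀⟩ := hω.exists
  have hdual := fun t (ht : s₀ + d ≤ t) => dual_ascent_eq_update_projGrad M (Real.sin θ) UN b γ
    c r (i := (h · ω)) (q := (q · ω)) (l := (l · ω))
    (hlrec · ω) (hlrec' · ω) (hqrec · ω) (hqrec' · ω) hs₀ ht
  have hl : Tendsto (fun t => l t ω) atTop (𝓝 ls) :=
    tendsto_of_eventually_update_projGrad (hpd.smul ha) hγ hdiag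
      (mul_two_mul_sq_div_sq_mul_lt_two hd hθ hUN.ne' hDpos hγ2) hω
      (nonneg_of_updates_nonneg (by rw [hl0]; exact hl0nonneg)
        (fun t => by rw [hlrec]; exact le_max_right _ _) (hlrec' · ω))
      (fun t ht => (hdual t ht).2) hls
  have hq : Tendsto (fun t => q t ω) atTop (𝓝 qs) := by
    rw [hfixq]
    exact ((hl.const_smul (Real.sin θ)).sub_const r).congr'
      ((eventually_ge_atTop (s₀ + d)).mono fun t ht => (hdual t ht).1.symm)
  exact hq.prodMk_nhds hl

/-- **Asynchronous convergence.** Let `M` be symmetric positive definite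
with `M_{hh} ≥ M_{hk} ≥ 0`, `D = max_h M_{hh}`, `sin θ ≠ 0`, `U_N > 0`, and
`0 < γ < U_N² / (sin²θ · d · D)`. Let `h(t)` be i.i.d. uniform random indices in
`Fin d`, and let `(q(t), λ(t))` evolve from deterministic initial conditions
(`λ(0) ≥ 0`) by the asynchronous dual-ascent update in which at time `t` only
coordinate `h(t)` is refreshed:
`λ_{h(t)}(t+1) = [λ_{h(t)}(t) + γ(b − v̂_{h(t)}(q(t)))]₊`,
`q_{h(t)}(t+1) = sin θ · λ_{h(t)}(t+1) − r_{h(t)}`, all other coordinates unchanged,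
where `v̂(q) = c + (2 sin θ / U_N²) M q`. If `(q*, λ*)` is a fixed point of the
corresponding synchronous iteration, then `(q(t), λ(t)) → (q*, λ*)` almost surely. -/
theorem asynchronous_convergence (d : ℕ) (hd : 1 ≤ d)
    (M : Matrix (Fin d) (Fin d) ℝ) (hpd : M.PosDef)
    (hM : ∀ h k : Fin d, M h k ≤ M h h ∧ 0 ≤ M h k)
    (D : ℝ) (hD : IsGreatest (Set.range fun h => M h h) D)
    (θ UN b : ℝ) (hθ : Real.sin θ ≠ 0) (hUN : 0 < UN)
    (c r : Fin d → ℝ)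
    (γ : ℝ) (hγ : 0 < γ) (hγ2 : γ < UN ^ 2 / (Real.sin θ ^ 2 * d * D))
    (Ω : Type*) [MeasurableSpace Ω] (P : Measure Ω) [IsProbabilityMeasure P]
    (h : ℕ → Ω → Fin d) (hmeas : ∀ t, Measurable (h t))
    (hindep : iIndepFun h P)
    (hunif : ∀ t (a : Fin d), P {ω | h t ω = a} = (d : ENNReal)⁻¹)
    (q l : ℕ → Ω → Fin d → ℝ)
    (q0 l0 : Fin d → ℝ) (hl0nonneg : ∀ k : Fin d, 0 ≤ l0 k)
    (hq0 : ∀ ω, q 0 ω = q0) (hl0 : ∀ ω, l 0 ω = l0)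
    (hlrec : ∀ t ω, l (t + 1) ω (h t ω) =
      max (l t ω (h t ω) +
        γ * (b - (c (h t ω) + 2 * Real.sin θ / UN ^ 2 * (M *ᵥ q t ω) (h t ω)))) 0)
    (hlrec' : ∀ t ω (k : Fin d), k ≠ h t ω → l (t + 1) ω k = l t ω k)
    (hqrec : ∀ t ω, q (t + 1) ω (h t ω) = Real.sin θ * l (t + 1) ω (h t ω) - r (h t ω))
    (hqrec' : ∀ t ω (k : Fin d), k ≠ h t ω → q (t + 1) ω k = q t ω k)
    (qs ls : Fin d → ℝ)
    (hfixl : ls = fun k => max (ls k + γ * (b - (c k + 2 * Real.sin θ / UN ^ 2 * (M *ᵥ qs) k))) 0)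
    (hfixq : qs = Real.sin θ • ls - r) :
    ∀ᵐ ω ∂P, Filter.Tendsto (fun t => (q t ω, l t ω)) Filter.atTop (nhds (qs, ls)) :=
  asynchronous_convergence_general d hd M hpd D hD θ UN b hθ hUN c r γ hγ hγ2 Ω P h hmeas hindep
    hunif q l l0 hl0nonneg hl0 hlrec hlrec' hqrec hqrec' qs ls hfixl hfixq
end
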